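/- arXiv:0803.1115 — 4 statements merged into one kernel-verified Lean document; each statement's English description precedes it below -/
import Mathlib

section
/- Fix i ∈ I and suppose 𝔟, 𝔠, 𝔡 and f_i(e_{α_i}) are units of 𝔯. Then ψ_i = φ_i + f_i⊠e_{α_i} is an automorphism of V, with inverse given by: ψ_i⁻¹(e_{α_i}) = f_i(e_{α_i})⁻¹·e_{α_i}; ψ_i⁻¹(e_α) = 𝔡⁻¹(e_α − f_i(e_α)·f_i(e_{α_i})⁻¹·e_{α_i}) if s_i(α) = α ≠ α_i; and, whenever β = s_i(α) ∈ Φ⁺ with dep(β) = dep(α)+1: ψ_i⁻¹(e_β) = 𝔠⁻¹(e_α − 𝔞𝔟⁻¹·e_β + (𝔞·f_i(e_β) − 𝔟·f_i(e_α))·(𝔟·f_i(e_{α_i}))⁻¹·e_{α_i}) and ψ_i⁻¹(e_α) = 𝔟⁻¹(e_β − f_i(e_β)·f_i(e_{α_i})⁻¹·e_{α_i}). -/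
set_option maxRecDepth 4000

namespace LK

/-! ### Coxeter matrices -/

/-- A Coxeter matrix on an index set `I` (entry `0` encodes `∞`). -/
structure CoxM (I : Type) where
  m : I → I → ℕ
  symm : ∀ i j, m i j = m j i
  one_iff : ∀ i j, m i j = 1 ↔ i = j

variable {I : Type}

/-- A Coxeter matrix is of small type if all its entries belong to `{1,2,3}`. -/
def CoxM.Small (M : CoxM I) : Prop := ∀ i j, M.m i j = 1 ∨ M.m i j = 2 ∨ M.m i j = 3

/-- The alternating word `i j i j ⋯` with `k` letters. -/
def braidList (k : ℕ) (i j : I) : List I :=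
  (List.range k).map (fun n => if n % 2 = 0 then i else j)

/-- The braid word `s_i s_j s_i ⋯` (`k` letters) in the free monoid. -/
def braidWord (k : ℕ) (i j : I) : FreeMonoid I := FreeMonoid.ofList (braidList k i j)

/-- The braid relations defining the Artin–Tits monoid. -/
def artinRel (M : CoxM I) : FreeMonoid I → FreeMonoid I → Prop :=
  fun x y => ∃ i j, M.m i j ≠ 0 ∧ x = braidWord (M.m i j) i j ∧ y = braidWord (M.m i j) j i

/-- The congruence on the free monoid generated by the braid relations. -/
def artinCon (M : CoxM I) : Con (FreeMonoid I) := conGen (artinRel M)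

/-- The Artin–Tits monoid `B⁺` of a Coxeter matrix. -/
def AM (M : CoxM I) := (artinCon M).Quotient

instance (M : CoxM I) : Monoid (AM M) := inferInstanceAs (Monoid (artinCon M).Quotient)

/-- The standard generators of the Artin–Tits monoid. -/
def gen (M : CoxM I) (i : I) : AM M := (artinCon M).mk' (FreeMonoid.of i)

/-- `I(b) = {i ∈ I ∣ s_i ≼ b}`, where `≼` is left divisibility. -/
def IdxSet (M : CoxM I) (x : AM M) : Set I := {i | gen M i ∣ x}

/-- The braid word `s_i s_j s_i ⋯` (`k` letters) in the free group. -/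
def braidWordG (k : ℕ) (i j : I) : FreeGroup I := ((braidList k i j).map FreeGroup.of).prod

/-- The braid relators defining the Artin–Tits group. -/
def artinGRels (M : CoxM I) : Set (FreeGroup I) :=
  {r | ∃ i j, M.m i j ≠ 0 ∧ r = braidWordG (M.m i j) i j * (braidWordG (M.m i j) j i)⁻¹}

/-- The Artin–Tits group `B` of a Coxeter matrix. -/
def AG (M : CoxM I) := PresentedGroup (artinGRels M)

instance (M : CoxM I) : Group (AG M) := inferInstanceAs (Group (PresentedGroup _))

/-- The standard generators of the Artin–Tits group. -/
def ggen (M : CoxM I) (i : I) : AG M := PresentedGroup.of i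

/-- The relators defining the Coxeter group. -/
def coxRels (M : CoxM I) : Set (FreeGroup I) :=
  {r | ∃ i j, M.m i j ≠ 0 ∧ r = (FreeGroup.of i * FreeGroup.of j) ^ (M.m i j)}

/-- The Coxeter group `W` of a Coxeter matrix. -/
def CoxG (M : CoxM I) := PresentedGroup (coxRels M)

instance (M : CoxM I) : Group (CoxG M) := inferInstanceAs (Group (PresentedGroup _))

/-- A Coxeter matrix is spherical if its Coxeter group is finite. -/
def Spherical (M : CoxM I) : Prop := Finite (CoxG M)

/-- Connectedness of the Coxeter graph: there is an edge between `i` and `j`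
iff `m i j ∉ {1,2}`. -/
def Connected (M : CoxM I) : Prop :=
  ∀ i j : I, Relation.ReflTransGen (fun a b => M.m a b ≠ 1 ∧ M.m a b ≠ 2) i j

/-- Restriction of a Coxeter matrix to a subset of the index set. -/
def CoxM.restrictF [DecidableEq I] (M : CoxM I) (J : Finset I) : CoxM {i // i ∈ J} :=
  ⟨fun i j => M.m i j, fun i j => M.symm i j,
   fun i j => (M.one_iff i j).trans (by exact Subtype.coe_inj)⟩

/-- An irreducible affine Coxeter matrix: connected, non-spherical, but every proper
parabolic submatrix is spherical. -/
def Affine [Fintype I] [DecidableEq I] (M : CoxM I) : Prop :=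
  Connected M ∧ ¬ Spherical M ∧ ∀ J : Finset I, J ≠ Finset.univ → Spherical (M.restrictF J)

/-! ### The standard root system -/

section Roots

variable [Fintype I] [DecidableEq I]

/-- The coefficients `-2 cos (π / m i j)` of the standard bilinear form. -/
noncomputable def cf (M : CoxM I) (i j : I) : ℝ := -2 * Real.cos (Real.pi / (M.m i j : ℝ))

/-- The standard symmetric bilinear form `( · | · )` on `E = ⊕ ℝ α_i`. -/
noncomputable def bform (M : CoxM I) (x y : I → ℝ) : ℝ := ∑ i, ∑ j, x i * y j * cf M i j

/-- The simple root `α_i`. -/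
def sroot (i : I) : I → ℝ := Pi.single i 1

/-- The simple reflection `s_i` acting on `E`. -/
noncomputable def srefl (M : CoxM I) (i : I) (v : I → ℝ) : I → ℝ :=
  v - bform M v (sroot i) • sroot i

/-- The roots: the orbit of the simple roots under the reflections. -/
inductive IsRoot (M : CoxM I) : (I → ℝ) → Prop
  | simple (i : I) : IsRoot M (sroot i)
  | srefl (i : I) (v : I → ℝ) : IsRoot M v → IsRoot M (LK.srefl M i v)

/-- The positive roots: roots with nonnegative coordinates. -/
def IsPos (M : CoxM I) (v : I → ℝ) : Prop := IsRoot M v ∧ ∀ i, 0 ≤ v i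

/-- The set `Φ⁺` of positive roots, as a type. -/
def Pos (M : CoxM I) := {v : I → ℝ // IsPos M v}

/-- The depth of a positive root: the least number of simple reflections needed to
send it to a negative vector. -/
noncomputable def dep (M : CoxM I) (v : I → ℝ) : ℕ :=
  sInf {n | ∃ l : List I, l.length = n ∧ ∃ k, l.foldr (srefl M) v k < 0}

theorem isPos_sroot (M : CoxM I) (i : I) : IsPos M (sroot i) :=
  ⟨IsRoot.simple i, fun j => by rw [sroot, Pi.single_apply]; split <;> norm_num⟩

/-- The simple root `α_i` as a positive root. -/
def simplePos (M : CoxM I) (i : I) : Pos M := ⟨sroot i, isPos_sroot M i⟩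

/-! ### The Lawrence–Krammer representation -/

variable (M : CoxM I) (R : Type) [CommRing R]

/-- The free module `V` with basis `(e_α)` indexed by the positive roots. -/
abbrev VV := Pos M →₀ R

/-- The basis vector `e_α` of `V`. -/
noncomputable def ev (α : Pos M) : VV M R := Finsupp.single α 1

open scoped Classical in
/-- The value of the map `φ_i` on the basis vector indexed by `α`. -/
noncomputable def phiAux (a b c d : R) (i : I) (α : Pos M) : VV M R :=
  if α.1 = sroot i then 0
  else if srefl M i α.1 = α.1 then d • ev M R α
  else if h : IsPos M (srefl M i α.1) then
    if dep M α.1 < dep M (srefl M i α.1) then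
      a • ev M R α + c • ev M R ⟨srefl M i α.1, h⟩
    else b • ev M R ⟨srefl M i α.1, h⟩
  else 0

/-- The linear map `φ_i : V → V`. -/
noncomputable def phi (a b c d : R) (i : I) : VV M R →ₗ[R] VV M R :=
  Finsupp.lift (VV M R) R (Pos M) (phiAux M R a b c d i)

/-- The linear map `ψ_i = φ_i + f_i ⊠ e_{α_i}`. -/
noncomputable def psim (a b c d : R) (f : I → (VV M R →ₗ[R] R)) (i : I) :
    VV M R →ₗ[R] VV M R :=
  phi M R a b c d i + (f i).smulRight (ev M R (simplePos M i))

/-- LK-families. -/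
structure IsLK (a b c d : R) (f : I → (VV M R →ₗ[R] R)) : Prop where
  diag : ∀ i j, i ≠ j → f i (ev M R (simplePos M j)) = 0
  rel2 : ∀ i j, M.m i j = 2 → (f i).comp (phi M R a b c d j) = d • f i
  rel3 : ∀ i j, M.m i j = 3 →
    (f i).comp (phi M R a b c d j) = (f j).comp (phi M R a b c d i)

/-- The `R`-module `𝓕` of LK-families. -/
noncomputable def LKFamilies (a b c d : R) : Submodule R (I → (VV M R →ₗ[R] R)) where
  carrier := {f | IsLK M R a b c d f}
  add_mem' := by
    rintro f g ⟨hf1, hf2, hf3⟩ ⟨hg1, hg2, hg3⟩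
    refine ⟨fun i j hij => ?_, fun i j hij => ?_, fun i j hij => ?_⟩
    · rw [Pi.add_apply, LinearMap.add_apply, hf1 i j hij, hg1 i j hij, add_zero]
    · simp only [Pi.add_apply, LinearMap.add_comp, hf2 i j hij, hg2 i j hij, smul_add]
    · simp only [Pi.add_apply, LinearMap.add_comp, hf3 i j hij, hg3 i j hij]
  zero_mem' := by
    refine ⟨fun i j hij => ?_, fun i j hij => ?_, fun i j hij => ?_⟩
    · rw [Pi.zero_apply, LinearMap.zero_apply]
    · simp only [Pi.zero_apply, LinearMap.zero_comp, smul_zero]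
    · simp only [Pi.zero_apply, LinearMap.zero_comp]
  smul_mem' := by
    rintro r f ⟨h1, h2, h3⟩
    refine ⟨fun i j hij => ?_, fun i j hij => ?_, fun i j hij => ?_⟩
    · rw [Pi.smul_apply, LinearMap.smul_apply, h1 i j hij, smul_zero]
    · rw [Pi.smul_apply, LinearMap.smul_comp, h2 i j hij]; exact smul_comm r d (f i)
    · simp only [Pi.smul_apply, LinearMap.smul_comp, h3 i j hij]

end Roots

/-! ### The monoid of binary relations -/

/-- The monoid of binary relations on a set `Ω`, where `β (R * S) α ↔ ∃ γ, β R γ ∧ γ S α`. -/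
def Bin (Ω : Type) := Ω → Ω → Prop

instance (Ω : Type) : Monoid (Bin Ω) where
  mul T S := fun x z => ∃ y, T x y ∧ S y z
  one := fun x y => x = y
  mul_assoc T S U := by
    funext x z
    apply propext
    constructor
    · rintro ⟨y, ⟨u, hTu, hSu⟩, hU⟩; exact ⟨u, hTu, y, hSu, hU⟩
    · rintro ⟨u, hT, y, hS, hU⟩; exact ⟨y, ⟨u, hT, hS⟩, hU⟩
  one_mul T := by
    funext x z
    apply propext
    constructor
    · rintro ⟨y, rfl, h⟩; exact h
    · intro h; exact ⟨x, rfl, h⟩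
  mul_one T := by
    funext x z
    apply propext
    constructor
    · rintro ⟨y, h, rfl⟩; exact h
    · intro h; exact ⟨z, h, rfl⟩

/-- `R(Ψ) = {β ∈ Ω ∣ ∃ α ∈ Ψ, β R α}`. -/
def Bin.image {Ω : Type} (T : Bin Ω) (Ψ : Set Ω) : Set Ω := {x | ∃ y ∈ Ψ, T x y}

/-! ### Further constructions -/

section More

variable [Fintype I] [DecidableEq I]

/-- The map `μ : 𝓕 → 𝔯` in the spherical case. -/
noncomputable def muSph (M : CoxM I) (R : Type) [CommRing R] (a b c d : R) (i0 : I) :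
    LKFamilies M R a b c d →ₗ[R] R where
  toFun f := f.1 i0 (ev M R (simplePos M i0))
  map_add' f g := rfl
  map_smul' r f := rfl

/-- A graph automorphism of a Coxeter matrix. -/
def IsAut (M : CoxM I) (g : Equiv.Perm I) : Prop := ∀ i j, M.m (g i) (g j) = M.m i j

/-- The action of a permutation of `I` on `E = ⊕ ℝ α_i`, sending `α_i` to `α_{g(i)}`. -/
def permE (g : Equiv.Perm I) (v : I → ℝ) : I → ℝ := fun i => v (g.symm i)

open scoped Classical in
/-- The element of `Φ⁺` with given coordinates (junk value if the vector is not
a positive root). -/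
noncomputable def posOf (M : CoxM I) [Nonempty I] (v : I → ℝ) : Pos M :=
  if h : IsPos M v then ⟨v, h⟩ else simplePos M (Classical.arbitrary I)

/-- The action of a permutation of `I` on `Φ⁺`. -/
noncomputable def permPos (M : CoxM I) [Nonempty I] (g : Equiv.Perm I) (α : Pos M) : Pos M :=
  posOf M (permE g α.1)

/-- The action of a permutation of `I` on `V`, permuting the basis `(e_α)`. -/
noncomputable def permV (M : CoxM I) (R : Type) [CommRing R] [Nonempty I] (g : Equiv.Perm I) :
    VV M R →ₗ[R] VV M R :=
  Finsupp.lmapDomain R R (permPos M g)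

/-- The submodule `V^G` of fixed points of `V` under a group `G` of permutations of `I`. -/
noncomputable def fixedV (M : CoxM I) (R : Type) [CommRing R] [Nonempty I]
    (G : Subgroup (Equiv.Perm I)) : Submodule R (VV M R) where
  carrier := {v | ∀ g ∈ G, permV M R g v = v}
  add_mem' hx hy g hg := by rw [map_add, hx g hg, hy g hg]
  zero_mem' g hg := map_zero _
  smul_mem' r v hv g hg := by rw [map_smul, hv g hg]

/-- The submonoid `(B⁺)^G` of fixed points of the Artin–Tits monoid under a group `G`
of permutations of `I` (acting via `actB`). -/
def fixedB (M : CoxM I) (actB : Equiv.Perm I → (AM M →* AM M))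
    (G : Subgroup (Equiv.Perm I)) : Submonoid (AM M) where
  carrier := {x | ∀ g ∈ G, actB g x = x}
  one_mem' g hg := map_one _
  mul_mem' hx hy g hg := by rw [map_mul, hx g hg, hy g hg]

/-- The map `μ : 𝓕 → 𝔯^ℕ` in the affine case, defined from the data of the imaginary
root `δ` and of a pair `(i0, j0)` with `m i0 j0 = 3`. -/
noncomputable def muAff (M : CoxM I) (R : Type) [CommRing R] [Nonempty I] (b c d : R)
    (δ : I → ℝ) (i0 j0 : I) (f : I → (VV M R →ₗ[R] R)) : ℕ → R := fun n =>
  if n % 2 = 0 then f i0 (ev M R (posOf M ((n / 2 : ℕ) • δ + sroot i0)))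
  else
    c * d * f i0 (ev M R (posOf M (((n + 1) / 2 : ℕ) • δ - sroot i0)))
      - b * c * f i0 (ev M R (posOf M (((n + 1) / 2 : ℕ) • δ - sroot i0 - sroot j0)))
      - d * d * f j0 (ev M R (posOf M (((n + 1) / 2 : ℕ) • δ - sroot i0 - sroot j0)))

end More

end LK

namespace LKAux

open LK

variable {I : Type} [Fintype I] [DecidableEq I] (M : CoxM I)

theorem cf_symm (i j : I) : cf M i j = cf M j i := by rw [cf, cf, M.symm]

theorem cf_diag (i : I) : cf M i i = 2 := by
  rw [cf, (M.one_iff i i).mpr rfl]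
  norm_num

theorem two_or_three (hs : M.Small) {i j : I} (h : i ≠ j) : M.m i j = 2 ∨ M.m i j = 3 := by
  rcases hs i j with h1 | h2 | h3
  · exact absurd ((M.one_iff i j).mp h1) h
  · exact Or.inl h2
  · exact Or.inr h3

theorem cf_two {i j : I} (h : M.m i j = 2) : cf M i j = 0 := by
  rw [cf, h]
  norm_num [Real.cos_pi_div_two]

theorem cf_three {i j : I} (h : M.m i j = 3) : cf M i j = -1 := by
  rw [cf, h]
  norm_num [Real.cos_pi_div_three]

theorem bform_add_left (x y z : I → ℝ) : bform M (x + y) z = bform M x z + bform M y z := by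
  simp [bform, add_mul, Finset.sum_add_distrib]

theorem bform_smul_left (r : ℝ) (x z : I → ℝ) : bform M (r • x) z = r * bform M x z := by
  simp [bform, Finset.mul_sum, mul_assoc]

theorem bform_neg_left (x z : I → ℝ) : bform M (-x) z = - bform M x z := by
  simp [bform, Finset.sum_neg_distrib]

theorem bform_sub_left (x y z : I → ℝ) : bform M (x - y) z = bform M x z - bform M y z := by
  rw [sub_eq_add_neg, bform_add_left, bform_neg_left, sub_eq_add_neg]

theorem bform_symm (x y : I → ℝ) : bform M x y = bform M y x := by
  rw [bform, bform, Finset.sum_comm]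
  apply Finset.sum_congr rfl; intro j _
  apply Finset.sum_congr rfl; intro i _
  rw [cf_symm]; ring

theorem bform_add_right (x y z : I → ℝ) : bform M z (x + y) = bform M z x + bform M z y := by
  rw [bform_symm, bform_add_left, bform_symm M x z, bform_symm M y z]

theorem bform_smul_right (r : ℝ) (x z : I → ℝ) : bform M z (r • x) = r * bform M z x := by
  rw [bform_symm, bform_smul_left, bform_symm]

theorem bform_sub_right (x y z : I → ℝ) : bform M z (x - y) = bform M z x - bform M z y := by
  rw [bform_symm, bform_sub_left, bform_symm M x z, bform_symm M y z]

theorem bform_sroot_sroot (i j : I) : bform M (sroot i) (sroot j) = cf M i j := by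
  rw [bform]
  rw [Finset.sum_eq_single i]
  · rw [Finset.sum_eq_single j]
    · simp [sroot]
    · intro k _ hk; simp [sroot, Pi.single_eq_of_ne hk]
    · intro h; exact absurd (Finset.mem_univ j) h
  · intro k _ hk
    simp [sroot, Pi.single_eq_of_ne hk]
  · intro h; exact absurd (Finset.mem_univ i) h

theorem srefl_def (i : I) (v : I → ℝ) :
    srefl M i v = v - bform M v (sroot i) • sroot i := rfl

theorem srefl_invol (i : I) (v : I → ℝ) : srefl M i (srefl M i v) = v := by
  rw [srefl_def, srefl_def, bform_sub_left, bform_smul_left, bform_sroot_sroot, cf_diag]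
  match_scalars <;> ring

theorem srefl_sroot_self (i : I) : srefl M i (sroot i) = -sroot i := by
  rw [srefl_def, bform_sroot_sroot, cf_diag]
  match_scalars <;> ring

theorem srefl_apply_ne (i : I) (v : I → ℝ) {k : I} (hk : k ≠ i) :
    srefl M i v k = v k := by
  rw [srefl_def]
  simp [sroot, Pi.single_eq_of_ne' (by exact fun h => hk h.symm : ¬ i = k)]

end LKAux
namespace LKAux

set_option linter.unusedSectionVars false

open LK

variable {I : Type} [Fintype I] [DecidableEq I] (M : CoxM I)

/-- The simple reflection as a linear endomorphism. -/
noncomputable def sreflL (i : I) : Module.End ℝ (I → ℝ) where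
  toFun := srefl M i
  map_add' x y := by
    show srefl M i (x + y) = srefl M i x + srefl M i y
    rw [srefl_def, srefl_def, srefl_def, bform_add_left]
    match_scalars <;> ring
  map_smul' r x := by
    show srefl M i (r • x) = r • srefl M i x
    rw [srefl_def, srefl_def, bform_smul_left]
    match_scalars <;> ring

theorem sreflL_apply (i : I) (v : I → ℝ) : sreflL M i v = srefl M i v := rfl

/-- The Coxeter matrix in Mathlib's sense. -/
def McxM : CoxeterMatrix I where
  M := Matrix.of M.m
  isSymm := by ext i j; exact (M.symm j i)
  diagonal i := (M.one_iff i i).mpr rfl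
  off_diagonal i j h := fun hc => h ((M.one_iff i j).mp hc)

/-- The Coxeter group. -/
abbrev Wg := (McxM M).Group

noncomputable instance : Group (Wg M) := inferInstance

/-- The Coxeter system. -/
def csys : CoxeterSystem (McxM M) (Wg M) := (McxM M).toCoxeterSystem

theorem liftable (hs : M.Small) :
    CoxeterMatrix.IsLiftable (McxM M) (fun k => sreflL M k) := by
  intro i j
  show (sreflL M i * sreflL M j) ^ (M.m i j) = 1
  rcases hs i j with h1 | h2 | h3
  · have hij : i = j := (M.one_iff i j).mp h1
    subst hij
    rw [h1, pow_one]
    apply LinearMap.ext; intro v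
    simp only [Module.End.mul_apply, Module.End.one_apply, sreflL_apply]
    rw [srefl_invol]
  · have hij : i ≠ j := fun hc => by rw [hc, (M.one_iff j j).mpr rfl] at h2; omega
    have hcf : cf M i j = 0 := cf_two M h2
    have hcf' : cf M j i = 0 := by rw [cf_symm]; exact hcf
    rw [h2]
    apply LinearMap.ext; intro v
    simp only [pow_succ, pow_zero, one_mul, Module.End.mul_apply, Module.End.one_apply,
      sreflL_apply]
    simp only [srefl_def, bform_sub_left, bform_smul_left, bform_sroot_sroot, cf_diag,
      hcf, hcf']
    match_scalars <;> ring
  · have hij : i ≠ j := fun hc => by rw [hc, (M.one_iff j j).mpr rfl] at h3; omega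
    have hcf : cf M i j = -1 := cf_three M h3
    have hcf' : cf M j i = -1 := by rw [cf_symm]; exact hcf
    rw [h3]
    apply LinearMap.ext; intro v
    simp only [pow_succ, pow_zero, one_mul, Module.End.mul_apply, Module.End.one_apply,
      sreflL_apply]
    simp only [srefl_def, bform_sub_left, bform_smul_left, bform_sroot_sroot, cf_diag,
      hcf, hcf']
    match_scalars <;> ring

/-- The geometric representation. -/
noncomputable def rho (hs : M.Small) : Wg M →* Module.End ℝ (I → ℝ) :=
  (csys M).lift ⟨fun k => sreflL M k, liftable M hs⟩

theorem rho_simple (hs : M.Small) (k : I) :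
    rho M hs ((csys M).simple k) = sreflL M k :=
  (csys M).lift_apply_simple (liftable M hs) k

end LKAux
namespace LKAux

set_option linter.unusedSectionVars false

open LK

variable {I : Type} [Fintype I] [DecidableEq I] (M : CoxM I)

theorem simple_ne (hs : M.Small) {i j : I} (hij : i ≠ j) :
    (csys M).simple i ≠ (csys M).simple j := by
  intro h
  have h2 := congrArg (rho M hs) h
  rw [rho_simple, rho_simple] at h2
  have h3 : srefl M i (sroot i) i = srefl M j (sroot i) i := by
    rw [← sreflL_apply, ← sreflL_apply, h2]
  rw [srefl_sroot_self, srefl_apply_ne M j (sroot i) hij] at h3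
  simp [sroot] at h3
  linarith

theorem rho_pos (hs : M.Small) : ∀ (n : ℕ) (w : Wg M) (i : I), (csys M).length w = n →
    ¬ (csys M).IsRightDescent w i → ∀ k, 0 ≤ (rho M hs w) (sroot i) k := by
  set cs := csys M with hcs
  intro n
  induction n using Nat.strong_induction_on with
  | _ n IH =>
  intro w i hlen hnd k
  by_cases hw1 : w = 1
  · subst hw1
    rw [map_one, Module.End.one_apply]
    exact (isPos_sroot M i).2 k
  obtain ⟨j, hj⟩ := cs.exists_rightDescent_of_ne_one hw1
  have hij : i ≠ j := fun h => hnd (h ▸ hj)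
  have hmij := two_or_three M hs hij
  set si := cs.simple i with hsi
  set sj := cs.simple j with hsj
  have hii : si * si = 1 := cs.simple_mul_simple_self i
  have hjj : sj * sj = 1 := cs.simple_mul_simple_self j
  have hcli : ∀ x, si * (si * x) = x := fun x => by
    rw [hsi]; exact cs.simple_mul_simple_cancel_left i
  have hclj : ∀ x, sj * (sj * x) = x := fun x => by
    rw [hsj]; exact cs.simple_mul_simple_cancel_left j
  have hlsi : cs.length si = 1 := by rw [hsi]; exact cs.length_simple i
  have hlsj : cs.length sj = 1 := by rw [hsj]; exact cs.length_simple j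
  have hsne : si ≠ sj := simple_ne M hs hij
  -- relations
  have hpow : (si * sj) ^ (M.m i j) = 1 := cs.simple_mul_simple_pow i j
  have hrel : (M.m i j = 2 ∧ si * sj = sj * si) ∨
      (M.m i j = 3 ∧ si * sj * si = sj * si * sj) := by
    rcases hmij with h2 | h3
    · left
      refine ⟨h2, ?_⟩
      rw [h2] at hpow
      have h0 : si * sj = (si * sj)⁻¹ := by
        rw [pow_two] at hpow
        exact (mul_eq_one_iff_eq_inv.mp hpow)
      calc si * sj = (si * sj)⁻¹ := h0
      _ = sj⁻¹ * si⁻¹ := mul_inv_rev si sj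
      _ = sj * si := by rw [hsi, hsj, cs.inv_simple, cs.inv_simple]
    · right
      refine ⟨h3, ?_⟩
      rw [h3] at hpow
      have e1 : si * sj * (si * sj) * (si * sj) = 1 := by
        rw [← hpow, pow_succ, pow_succ, pow_one]
      have e2 := congrArg (fun x => x * (sj * (si * sj))) e1
      simp only [one_mul, mul_assoc] at e2
      simp only [hclj, hcli, hii, hjj, mul_one] at e2
      simpa [mul_assoc] using e2
  -- the dihedral set
  set DP : Wg M → Prop :=
    fun x => x = 1 ∨ x = si ∨ x = sj ∨ x = si*sj ∨ x = sj*si ∨ x = si*sj*si with hDP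
  have hLi : ∀ x, DP x → DP (si * x) := by
    rintro x (rfl | rfl | rfl | rfl | rfl | rfl)
    · right; left; rw [mul_one]
    · left; exact hii
    · right; right; right; left; rfl
    · right; right; left; rw [← mul_assoc, hii, one_mul]
    · right; right; right; right; right; rw [← mul_assoc]
    · right; right; right; right; left
      calc si * (si * sj * si) = (si * si) * (sj * si) := by group
      _ = sj * si := by rw [hii, one_mul]
  have hLj : ∀ x, DP x → DP (sj * x) := by
    rintro x (rfl | rfl | rfl | rfl | rfl | rfl)
    · right; right; left; rw [mul_one]
    · right; right; right; right; left; rfl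
    · left; exact hjj
    · rcases hrel with ⟨_, hcomm⟩ | ⟨_, hbr⟩
      · right; left
        rw [hcomm, ← mul_assoc, hjj, one_mul]
      · right; right; right; right; right
        rw [← mul_assoc, ← hbr]
    · right; left; rw [← mul_assoc, hjj, one_mul]
    · rcases hrel with ⟨_, hcomm⟩ | ⟨_, hbr⟩
      · left
        have h0 : si * sj * si = sj := by rw [hcomm, mul_assoc, hii, mul_one]
        rw [h0, hjj]
      · right; right; right; left
        rw [hbr]
        calc sj * (sj * si * sj) = (sj * sj) * (si * sj) := by group
        _ = si * sj := by rw [hjj, one_mul]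
  -- the set A
  set A : Set (Wg M) := {u | DP (u⁻¹ * w) ∧ cs.length u + cs.length (u⁻¹ * w) = cs.length w}
    with hA
  have hwA : w ∈ A := by
    constructor
    · rw [inv_mul_cancel]; left; rfl
    · rw [inv_mul_cancel, cs.length_one, add_zero]
  have hj' : cs.length (w * sj) < cs.length w := hj
  have hjlen : cs.length (w * sj) + 1 = cs.length w := by
    have h' := cs.length_mul_simple w j
    rw [← hsj] at h'
    omega
  have hwsjA : w * sj ∈ A := by
    have hinv : (w * sj)⁻¹ * w = sj := by
      rw [mul_inv_rev, mul_assoc, inv_mul_cancel, mul_one, hsj, cs.inv_simple]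
    constructor
    · rw [hinv]; right; right; left; rfl
    · rw [hinv]; omega
  -- minimal element of A
  have hNS : {m | ∃ u ∈ A, cs.length u = m}.Nonempty := ⟨cs.length w, w, hwA, rfl⟩
  obtain ⟨u, huA, hun⟩ := Nat.sInf_mem hNS
  have hmin : ∀ u' ∈ A, sInf {m | ∃ u ∈ A, cs.length u = m} ≤ cs.length u' :=
    fun u' h => Nat.sInf_le ⟨u', h, rfl⟩
  have hult : cs.length u < cs.length w := by
    have := hmin _ hwsjA
    omega
  have hclaim1 : ∀ k', (k' = i ∨ k' = j) → ¬ cs.IsRightDescent u k' := by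
    intro k' hk' hdesc
    have hdesc' : cs.length (u * cs.simple k') < cs.length u := hdesc
    have hdl : cs.length (u * cs.simple k') + 1 = cs.length u := by
      rcases cs.length_mul_simple u k' with h | h <;> omega
    have hinv : (u * cs.simple k')⁻¹ * w = cs.simple k' * (u⁻¹ * w) := by
      rw [mul_inv_rev, cs.inv_simple, mul_assoc]
    have hm : DP ((u * cs.simple k')⁻¹ * w) := by
      rw [hinv]
      rcases hk' with rfl | rfl
      · rw [← hsi]; exact hLi _ huA.1
      · rw [← hsj]; exact hLj _ huA.1
    have h1 : cs.length w ≤ cs.length (u * cs.simple k') +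
        cs.length ((u * cs.simple k')⁻¹ * w) := by
      have h := cs.length_mul_le (u * cs.simple k') ((u * cs.simple k')⁻¹ * w)
      rwa [mul_inv_cancel_left] at h
    have h2 : cs.length ((u * cs.simple k')⁻¹ * w) ≤ 1 + cs.length (u⁻¹ * w) := by
      rw [hinv]
      have h := cs.length_mul_le (cs.simple k') (u⁻¹ * w)
      rwa [cs.length_simple] at h
    have huA2 := huA.2
    have hmem : u * cs.simple k' ∈ A := ⟨hm, by omega⟩
    have := hmin _ hmem
    omega
  set a := u⁻¹ * w with ha_def
  have hDa : DP a := huA.1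
  have hlen_ua : cs.length u + cs.length a = cs.length w := huA.2
  have hw_ua : w = u * a := by rw [ha_def, mul_inv_cancel_left]
  have hnda : ¬ cs.IsRightDescent a i := by
    intro hd
    have hd' : cs.length (a * si) < cs.length a := hd
    have hdl : cs.length (a * si) + 1 = cs.length a := by
      have h := cs.length_mul_simple a i
      rw [← hsi] at h
      omega
    have h1 : cs.length (w * si) ≤ cs.length u + cs.length (a * si) := by
      rw [hw_ua, mul_assoc]
      exact cs.length_mul_le u (a * si)
    apply hnd
    show cs.length (w * cs.simple i) < cs.length w
    rw [← hsi]
    omega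
  -- induction hypotheses
  have IHi : ∀ k, 0 ≤ (rho M hs u) (sroot i) k := fun k =>
    IH (cs.length u) (by omega) u i rfl (hclaim1 i (Or.inl rfl)) k
  have IHj : ∀ k, 0 ≤ (rho M hs u) (sroot j) k := fun k =>
    IH (cs.length u) (by omega) u j rfl (hclaim1 j (Or.inr rfl)) k
  -- lengths of short elements
  have hlsij : 2 ≤ cs.length (si * sj) := by
    have hne1 : si * sj ≠ 1 := by
      intro hh
      rw [mul_eq_one_iff_eq_inv, hsj, cs.inv_simple, ← hsj] at hh
      exact hsne hh
    have hmod : cs.length (si * sj) % 2 = 0 := by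
      have h' := cs.length_mul_mod_two si sj
      rw [hlsi, hlsj] at h'
      omega
    have hne0 : cs.length (si * sj) ≠ 0 := fun hh => hne1 (cs.length_eq_zero_iff.mp hh)
    omega
  have hlsji : 2 ≤ cs.length (sj * si) := by
    have hne1 : sj * si ≠ 1 := by
      intro hh
      rw [mul_eq_one_iff_eq_inv, hsi, cs.inv_simple, ← hsi] at hh
      exact hsne hh.symm
    have hmod : cs.length (sj * si) % 2 = 0 := by
      have h' := cs.length_mul_mod_two sj si
      rw [hlsi, hlsj] at h'
      omega
    have hne0 : cs.length (sj * si) ≠ 0 := fun hh => hne1 (cs.length_eq_zero_iff.mp hh)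
    omega
  -- the case analysis
  rw [hw_ua, map_mul, Module.End.mul_apply]
  rcases hDa with h | h | h | h | h | h
  · rw [h, map_one, Module.End.one_apply]
    exact IHi k
  · -- a = si : impossible
    exfalso
    apply hnda
    show cs.length (a * cs.simple i) < cs.length a
    rw [← hsi, h, hii, cs.length_one, hlsi]
    omega
  · -- a = sj
    have hval : (rho M hs) sj (sroot i) = sroot i - cf M i j • sroot j := by
      rw [hsj, rho_simple, sreflL_apply, srefl_def, bform_sroot_sroot]
    rw [h, hval, map_sub, map_smul]
    rcases hmij with h2 | h3
    · rw [cf_two M h2]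
      simpa using IHi k
    · rw [cf_three M h3]
      simp only [Pi.sub_apply, Pi.smul_apply, smul_eq_mul]
      nlinarith [IHi k, IHj k]
  · -- a = si * sj
    rcases hrel with ⟨h2, hcomm⟩ | ⟨h3, hbr⟩
    · -- m = 2 : impossible
      exfalso
      apply hnda
      have hid : si * sj * si = sj := by rw [hcomm, mul_assoc, hii, mul_one]
      show cs.length (a * cs.simple i) < cs.length a
      rw [← hsi, h, hid, hlsj]
      omega
    · -- m = 3 : value is sroot j
      have hcf : cf M i j = -1 := cf_three M h3
      have hcf' : cf M j i = -1 := by rw [cf_symm]; exact hcf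
      have hval : (rho M hs) (si * sj) (sroot i) = sroot j := by
        rw [map_mul, Module.End.mul_apply, hsi, hsj, rho_simple, rho_simple,
          sreflL_apply, sreflL_apply]
        simp only [srefl_def, bform_sub_left, bform_smul_left, bform_sroot_sroot, cf_diag,
          hcf, hcf']
        match_scalars <;> ring
      rw [h, hval]
      exact IHj k
  · -- a = sj * si : impossible
    exfalso
    apply hnda
    have hid : sj * si * si = sj := by rw [mul_assoc, hii, mul_one]
    show cs.length (a * cs.simple i) < cs.length a
    rw [← hsi, h, hid, hlsj]
    omega
  · -- a = si * sj * si
    rcases hrel with ⟨h2, hcomm⟩ | ⟨h3, hbr⟩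
    · -- m = 2 : equals sj
      have hid : si * sj * si = sj := by rw [hcomm, mul_assoc, hii, mul_one]
      have hval : (rho M hs) sj (sroot i) = sroot i - cf M i j • sroot j := by
        rw [hsj, rho_simple, sreflL_apply, srefl_def, bform_sroot_sroot]
      rw [h, hid, hval, map_sub, map_smul, cf_two M h2]
      simpa using IHi k
    · -- m = 3 : impossible
      exfalso
      have hcf : cf M i j = -1 := cf_three M h3
      have hcf' : cf M j i = -1 := by rw [cf_symm]; exact hcf
      have hval : (rho M hs) (si * sj * si) (sroot i) = -sroot j := by
        rw [map_mul, map_mul, Module.End.mul_apply, Module.End.mul_apply, hsi, hsj,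
          rho_simple, rho_simple, sreflL_apply, sreflL_apply, sreflL_apply]
        simp only [srefl_def, bform_sub_left, bform_smul_left, bform_sroot_sroot, cf_diag,
          hcf, hcf']
        match_scalars <;> ring
      have hmod : cs.length (si * sj * si) % 2 = 1 := by
        have h1 := cs.length_mul_mod_two (si * sj) si
        have h2' := cs.length_mul_mod_two si sj
        rw [hlsi] at h1
        rw [hlsi, hlsj] at h2'
        omega
      have hne1 : cs.length (si * sj * si) ≠ 1 := by
        intro hh
        obtain ⟨kk, hkk⟩ := cs.length_eq_one_iff.mp hh
        have h2' := congrArg (rho M hs) hkk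
        rw [rho_simple] at h2'
        have h3' : (-sroot j : I → ℝ) i = sreflL M kk (sroot i) i := by
          rw [← hval, h2']
        rw [sreflL_apply] at h3'
        by_cases hki : kk = i
        · subst hki
          rw [srefl_sroot_self] at h3'
          simp [sroot, Pi.single_eq_of_ne hij] at h3'
        · rw [srefl_apply_ne M kk (sroot i) (Ne.symm hki)] at h3'
          simp [sroot, Pi.single_eq_of_ne hij] at h3'
      have hge3 : 3 ≤ cs.length (si * sj * si) := by omega
      apply hnda
      have hid : si * sj * si * si = si * sj := by rw [mul_assoc, hii, mul_one]
      have hle : cs.length (si * sj) ≤ 2 := by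
        have h' := cs.length_mul_le si sj
        rw [hlsi, hlsj] at h'
        omega
      show cs.length (a * cs.simple i) < cs.length a
      rw [← hsi, h, hid]
      omega

end LKAux
namespace LKAux

set_option linter.unusedSectionVars false

open LK

variable {I : Type} [Fintype I] [DecidableEq I] (M : CoxM I)

theorem isRoot_exists (hs : M.Small) {v : I → ℝ} (hv : IsRoot M v) :
    ∃ (w : Wg M) (k : I), v = (rho M hs w) (sroot k) := by
  induction hv with
  | simple k => exact ⟨1, k, by rw [map_one, Module.End.one_apply]⟩
  | srefl i u _ ih =>
    obtain ⟨w, k, rfl⟩ := ih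
    exact ⟨(csys M).simple i * w, k, by
      rw [map_mul, Module.End.mul_apply, rho_simple, sreflL_apply]⟩

theorem root_dichotomy (hs : M.Small) {v : I → ℝ} (hv : IsRoot M v) :
    (∀ k, 0 ≤ v k) ∨ (∀ k, v k ≤ 0) := by
  obtain ⟨w, i, rfl⟩ := isRoot_exists M hs hv
  set cs := csys M with hcs
  by_cases hd : cs.IsRightDescent w i
  · right
    intro k
    have hw : w = (w * cs.simple i) * cs.simple i := by
      rw [mul_assoc, cs.simple_mul_simple_self, mul_one]
    have hval : (rho M hs) w (sroot i) = -((rho M hs) (w * cs.simple i) (sroot i)) := by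
      conv_lhs => rw [hw]
      rw [map_mul, Module.End.mul_apply, rho_simple, sreflL_apply, srefl_sroot_self, map_neg]
    have hnd2 : ¬ cs.IsRightDescent (w * cs.simple i) i := by
      intro hd2
      have h1 : cs.length (w * cs.simple i) < cs.length w := hd
      have h2 : cs.length (w * cs.simple i * cs.simple i) < cs.length (w * cs.simple i) := hd2
      rw [cs.simple_mul_simple_cancel_right] at h2
      omega
    have := rho_pos M hs (cs.length (w * cs.simple i)) (w * cs.simple i) i rfl hnd2 k
    rw [hval]
    simp only [Pi.neg_apply]
    linarith
  · exact Or.inl (rho_pos M hs (cs.length w) w i rfl hd)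

theorem bform_root (hv : IsRoot M v) : bform M v v = 2 := by
  induction hv with
  | simple k => rw [bform_sroot_sroot, cf_diag]
  | srefl i u _ ih =>
    rw [srefl_def, bform_sub_left, bform_sub_right, bform_sub_right, bform_smul_left,
      bform_smul_left, bform_smul_right, bform_smul_right, bform_sroot_sroot, cf_diag,
      bform_symm M (sroot i) u]
    nlinarith [ih]

theorem key_pos (hs : M.Small) (i : I) (v : I → ℝ) (hv : IsPos M v) (hne : v ≠ sroot i) :
    IsPos M (srefl M i v) := by
  refine ⟨IsRoot.srefl i v hv.1, ?_⟩
  by_cases hex : ∃ k, k ≠ i ∧ 0 < v k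
  · obtain ⟨k, hki, hk⟩ := hex
    rcases root_dichotomy M hs (IsRoot.srefl i v hv.1) with h | h
    · exact h
    · exfalso
      have := h k
      rw [srefl_apply_ne M i v hki] at this
      linarith
  · exfalso
    push_neg at hex
    have hzero : ∀ k, k ≠ i → v k = 0 := fun k hk => le_antisymm (hex k hk) (hv.2 k)
    have hvv : v = v i • sroot i := by
      funext k
      by_cases hk : k = i
      · subst hk; simp [sroot]
      · rw [hzero k hk]; simp [sroot, Pi.single_eq_of_ne hk]
    have hb : bform M v v = 2 := bform_root M hv.1
    rw [hvv, bform_smul_left, bform_smul_right, bform_sroot_sroot, cf_diag] at hb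
    have hvi : v i = 1 := by nlinarith [hv.2 i]
    apply hne
    rw [hvv, hvi, one_smul]

theorem srefl_ne_sroot (i : I) (α : Pos M) : srefl M i α.1 ≠ sroot i := by
  intro h
  have h2 : α.1 = srefl M i (sroot i) := by rw [← h, srefl_invol]
  rw [srefl_sroot_self] at h2
  have := α.2.2 i
  rw [h2] at this
  simp [sroot] at this
  linarith

end LKAux
namespace LKAux

set_option linter.unusedSectionVars false

open LK

variable {I : Type} [Fintype I] [DecidableEq I]

section Inv

variable (M : CoxM I) (R : Type) [CommRing R] (a b c d : R) (f : I → (VV M R →ₗ[R] R)) (i : I)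

open scoped Classical in
/-- The inverse of `ψ_i` on basis vectors. -/
noncomputable def invAux (α : Pos M) : VV M R :=
  if α.1 = sroot i then
    Ring.inverse (f i (ev M R (simplePos M i))) • ev M R (simplePos M i)
  else if srefl M i α.1 = α.1 then
    Ring.inverse d • (ev M R α -
      (Ring.inverse (f i (ev M R (simplePos M i))) * f i (ev M R α)) • ev M R (simplePos M i))
  else if h : IsPos M (srefl M i α.1) then
    if dep M (srefl M i α.1) < dep M α.1 then
      Ring.inverse c • (ev M R ⟨srefl M i α.1, h⟩ - (Ring.inverse b * a) • ev M R α
        + (Ring.inverse (b * f i (ev M R (simplePos M i)))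
            * (a * f i (ev M R α) - b * f i (ev M R ⟨srefl M i α.1, h⟩)))
          • ev M R (simplePos M i))
    else
      Ring.inverse b • (ev M R ⟨srefl M i α.1, h⟩
        - (Ring.inverse (f i (ev M R (simplePos M i))) * f i (ev M R ⟨srefl M i α.1, h⟩))
          • ev M R (simplePos M i))
  else 0

/-- The inverse of `ψ_i`. -/
noncomputable def psiInv : VV M R →ₗ[R] VV M R :=
  Finsupp.lift (VV M R) R (Pos M) (invAux M R a b c d f i)

theorem lift_ev (g : Pos M → VV M R) (α : Pos M) :
    Finsupp.lift (VV M R) R (Pos M) g (ev M R α) = g α := by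
  rw [ev, Finsupp.lift_apply, Finsupp.sum_single_index, one_smul]
  exact zero_smul R (g α)

theorem psiInv_ev (α : Pos M) :
    psiInv M R a b c d f i (ev M R α) = invAux M R a b c d f i α :=
  lift_ev M R _ α

theorem psim_ev (α : Pos M) :
    psim M R a b c d f i (ev M R α)
      = phiAux M R a b c d i α + f i (ev M R α) • ev M R (simplePos M i) := by
  rw [psim, LinearMap.add_apply, LinearMap.smulRight_apply, phi, lift_ev]

/- ### value lemmas for `phiAux` -/

theorem phiAux_sroot (α : Pos M) (h1 : α.1 = sroot i) :
    phiAux M R a b c d i α = 0 := by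
  unfold phiAux
  rw [if_pos h1]

theorem phiAux_fix (α : Pos M) (h1 : α.1 ≠ sroot i) (h2 : srefl M i α.1 = α.1) :
    phiAux M R a b c d i α = d • ev M R α := by
  unfold phiAux
  rw [if_neg h1, if_pos h2]

theorem phiAux_up (α β : Pos M) (hβ : β.1 = srefl M i α.1) (h1 : α.1 ≠ sroot i)
    (h2 : srefl M i α.1 ≠ α.1) (h4 : dep M α.1 < dep M β.1) :
    phiAux M R a b c d i α = a • ev M R α + c • ev M R β := by
  have hpos : IsPos M (srefl M i α.1) := hβ ▸ β.2
  unfold phiAux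
  rw [if_neg h1, if_neg h2, dif_pos hpos,
    if_pos (show dep M α.1 < dep M (srefl M i α.1) by rw [← hβ]; exact h4),
    show (⟨srefl M i α.1, hpos⟩ : Pos M) = β from Subtype.ext hβ.symm]

theorem phiAux_down (α β : Pos M) (hβ : β.1 = srefl M i α.1) (h1 : α.1 ≠ sroot i)
    (h2 : srefl M i α.1 ≠ α.1) (h4 : ¬ dep M α.1 < dep M β.1) :
    phiAux M R a b c d i α = b • ev M R β := by
  have hpos : IsPos M (srefl M i α.1) := hβ ▸ β.2
  unfold phiAux
  rw [if_neg h1, if_neg h2, dif_pos hpos,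
    if_neg (show ¬ dep M α.1 < dep M (srefl M i α.1) by rw [← hβ]; exact h4),
    show (⟨srefl M i α.1, hpos⟩ : Pos M) = β from Subtype.ext hβ.symm]

/- ### value lemmas for `invAux` -/

theorem invAux_sroot (α : Pos M) (h1 : α.1 = sroot i) :
    invAux M R a b c d f i α
      = Ring.inverse (f i (ev M R (simplePos M i))) • ev M R (simplePos M i) := by
  unfold invAux
  rw [if_pos h1]

theorem invAux_fix (α : Pos M) (h1 : α.1 ≠ sroot i) (h2 : srefl M i α.1 = α.1) :
    invAux M R a b c d f i α = Ring.inverse d • (ev M R α -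
      (Ring.inverse (f i (ev M R (simplePos M i))) * f i (ev M R α))
        • ev M R (simplePos M i)) := by
  unfold invAux
  rw [if_neg h1, if_pos h2]

theorem invAux_deep (α β : Pos M) (hβ : β.1 = srefl M i α.1) (h1 : α.1 ≠ sroot i)
    (h2 : srefl M i α.1 ≠ α.1) (h4 : dep M β.1 < dep M α.1) :
    invAux M R a b c d f i α
      = Ring.inverse c • (ev M R β - (Ring.inverse b * a) • ev M R α
        + (Ring.inverse (b * f i (ev M R (simplePos M i)))
            * (a * f i (ev M R α) - b * f i (ev M R β))) • ev M R (simplePos M i)) := by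
  have hpos : IsPos M (srefl M i α.1) := hβ ▸ β.2
  unfold invAux
  rw [if_neg h1, if_neg h2, dif_pos hpos,
    if_pos (show dep M (srefl M i α.1) < dep M α.1 by rw [← hβ]; exact h4),
    show (⟨srefl M i α.1, hpos⟩ : Pos M) = β from Subtype.ext hβ.symm]

theorem invAux_shallow (α β : Pos M) (hβ : β.1 = srefl M i α.1) (h1 : α.1 ≠ sroot i)
    (h2 : srefl M i α.1 ≠ α.1) (h4 : ¬ dep M β.1 < dep M α.1) :
    invAux M R a b c d f i α
      = Ring.inverse b • (ev M R β
        - (Ring.inverse (f i (ev M R (simplePos M i))) * f i (ev M R β))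
          • ev M R (simplePos M i)) := by
  have hpos : IsPos M (srefl M i α.1) := hβ ▸ β.2
  unfold invAux
  rw [if_neg h1, if_neg h2, dif_pos hpos,
    if_neg (show ¬ dep M (srefl M i α.1) < dep M α.1 by rw [← hβ]; exact h4),
    show (⟨srefl M i α.1, hpos⟩ : Pos M) = β from Subtype.ext hβ.symm]

end Inv

section Comp

variable (M : CoxM I) (R : Type) [CommRing R] (a b c d : R)
  (f : I → (VV M R →ₗ[R] R)) (i : I)

theorem comp_left (hs : M.Small) (hb : IsUnit b) (hc : IsUnit c) (hd : IsUnit d)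
    (hf : IsUnit (f i (ev M R (simplePos M i)))) (α : Pos M) :
    psim M R a b c d f i (psiInv M R a b c d f i (ev M R α)) = ev M R α := by
  have hb1 : Ring.inverse b * b = 1 := Ring.inverse_mul_cancel b hb
  have hc1 : Ring.inverse c * c = 1 := Ring.inverse_mul_cancel c hc
  have hd1 : Ring.inverse d * d = 1 := Ring.inverse_mul_cancel d hd
  have hg1 : Ring.inverse (f i (ev M R (simplePos M i))) * (f i (ev M R (simplePos M i))) = 1 :=
    Ring.inverse_mul_cancel _ hf
  have hbg : Ring.inverse (b * f i (ev M R (simplePos M i)))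
      = Ring.inverse (f i (ev M R (simplePos M i))) * Ring.inverse b :=
    Ring.mul_inverse_rev b _
  have hpsiei : psim M R a b c d f i (ev M R (simplePos M i))
      = f i (ev M R (simplePos M i)) • ev M R (simplePos M i) := by
    rw [psim_ev, phiAux_sroot M R a b c d i _ rfl, zero_add]
  rw [psiInv_ev]
  by_cases h1 : α.1 = sroot i
  · have hα : α = simplePos M i := Subtype.ext h1
    subst hα
    rw [invAux_sroot M R a b c d f i _ rfl, map_smul, hpsiei, smul_smul, hg1, one_smul]
  by_cases h2 : srefl M i α.1 = α.1
  · rw [invAux_fix M R a b c d f i α h1 h2, map_smul, map_sub, map_smul, psim_ev,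
      phiAux_fix M R a b c d i α h1 h2, hpsiei]
    match_scalars
    all_goals first
      | linear_combination hd1
      | linear_combination (-(Ring.inverse d * f i (ev M R α))) * hg1

  have h3 : IsPos M (srefl M i α.1) := key_pos M hs i α.1 α.2 h1
  have hβv : ((⟨srefl M i α.1, h3⟩ : Pos M)).1 = srefl M i α.1 := rfl
  set β : Pos M := ⟨srefl M i α.1, h3⟩ with hβdef
  have hβ : β.1 = srefl M i α.1 := rfl
  have hαβ : α.1 = srefl M i β.1 := by rw [hβ, srefl_invol]
  have hβn : β.1 ≠ sroot i := srefl_ne_sroot M i α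
  have hβf : srefl M i β.1 ≠ β.1 := by rw [← hαβ]; exact fun hh => h2 (hβ ▸ hh.symm)
  by_cases h4 : dep M β.1 < dep M α.1
  · -- α is deep
    rw [invAux_deep M R a b c d f i α β hβ h1 h2 h4, map_smul, map_add, map_sub, map_smul,
      map_smul, psim_ev, psim_ev, hpsiei,
      phiAux_up M R a b c d i β α hαβ hβn hβf h4,
      phiAux_down M R a b c d i α β hβ h1 h2 (by omega), hbg]
    match_scalars
    all_goals first
      | linear_combination hc1
      | linear_combination (-(Ring.inverse c * a)) * hb1
      | linear_combination (-(Ring.inverse c * f i (ev M R β) * Ring.inverse (f i (ev M R (simplePos M i)))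
            * f i (ev M R (simplePos M i)))) * hb1
          + (Ring.inverse c * Ring.inverse b * a * f i (ev M R α)
              - Ring.inverse c * f i (ev M R β)) * hg1

  · -- α is shallow or equal
    rw [invAux_shallow M R a b c d f i α β hβ h1 h2 h4, map_smul, map_sub, map_smul,
      psim_ev, hpsiei, phiAux_down M R a b c d i β α hαβ hβn hβf (by omega)]
    match_scalars
    all_goals first
      | linear_combination hb1
      | linear_combination (-(Ring.inverse b * f i (ev M R β))) * hg1


theorem comp_right (hs : M.Small) (hb : IsUnit b) (hc : IsUnit c) (hd : IsUnit d)
    (hf : IsUnit (f i (ev M R (simplePos M i)))) (α : Pos M) :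
    psiInv M R a b c d f i (psim M R a b c d f i (ev M R α)) = ev M R α := by
  have hb1 : Ring.inverse b * b = 1 := Ring.inverse_mul_cancel b hb
  have hc1 : Ring.inverse c * c = 1 := Ring.inverse_mul_cancel c hc
  have hd1 : Ring.inverse d * d = 1 := Ring.inverse_mul_cancel d hd
  have hg1 : Ring.inverse (f i (ev M R (simplePos M i))) * (f i (ev M R (simplePos M i))) = 1 :=
    Ring.inverse_mul_cancel _ hf
  have hbg : Ring.inverse (b * f i (ev M R (simplePos M i)))
      = Ring.inverse (f i (ev M R (simplePos M i))) * Ring.inverse b :=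
    Ring.mul_inverse_rev b _
  have hiei : psiInv M R a b c d f i (ev M R (simplePos M i))
      = Ring.inverse (f i (ev M R (simplePos M i))) • ev M R (simplePos M i) := by
    rw [psiInv_ev, invAux_sroot M R a b c d f i _ rfl]
  by_cases h1 : α.1 = sroot i
  · have hα : α = simplePos M i := Subtype.ext h1
    subst hα
    rw [psim_ev, phiAux_sroot M R a b c d i _ rfl, zero_add, map_smul, hiei, smul_smul]
    rw [mul_comm, hg1, one_smul]
  by_cases h2 : srefl M i α.1 = α.1
  · rw [psim_ev, phiAux_fix M R a b c d i α h1 h2, map_add, map_smul, map_smul, psiInv_ev,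
      invAux_fix M R a b c d f i α h1 h2, hiei]
    match_scalars
    all_goals first
      | linear_combination hd1
      | linear_combination (-(Ring.inverse (f i (ev M R (simplePos M i))) * f i (ev M R α))) * hd1

  have h3 : IsPos M (srefl M i α.1) := key_pos M hs i α.1 α.2 h1
  set β : Pos M := ⟨srefl M i α.1, h3⟩ with hβdef
  have hβ : β.1 = srefl M i α.1 := rfl
  have hαβ : α.1 = srefl M i β.1 := by rw [hβ, srefl_invol]
  have hβn : β.1 ≠ sroot i := srefl_ne_sroot M i α
  have hβf : srefl M i β.1 ≠ β.1 := by rw [← hαβ]; exact fun hh => h2 (hβ ▸ hh.symm)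
  by_cases h5 : dep M α.1 < dep M β.1
  · -- α is shallow, β is deep
    rw [psim_ev, phiAux_up M R a b c d i α β hβ h1 h2 h5, map_add, map_add, map_smul,
      map_smul, map_smul, psiInv_ev, psiInv_ev, hiei,
      invAux_shallow M R a b c d f i α β hβ h1 h2 (by omega),
      invAux_deep M R a b c d f i β α hαβ hβn hβf h5, hbg]
    match_scalars
    all_goals first
      | linear_combination (-(Ring.inverse b * a)) * hc1
      | linear_combination hc1
      | linear_combination (Ring.inverse (f i (ev M R (simplePos M i))) * f i (ev M R α) * (2 - Ring.inverse c * c)) * hb1 + hc1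
      | linear_combination (-(Ring.inverse (f i (ev M R (simplePos M i))) * f i (ev M R α))) * hb1
          + (Ring.inverse (f i (ev M R (simplePos M i))) * Ring.inverse b * (a * f i (ev M R β) - b * f i (ev M R α))) * hc1

  · -- β is at most as deep as α
    rw [psim_ev, phiAux_down M R a b c d i α β hβ h1 h2 h5, map_add, map_smul, map_smul,
      psiInv_ev, hiei, invAux_shallow M R a b c d f i β α hαβ hβn hβf (by omega)]
    match_scalars
    all_goals first
      | linear_combination hb1
      | linear_combination (-(Ring.inverse (f i (ev M R (simplePos M i))) * f i (ev M R α))) * hb1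


end Comp

end LKAux

open LK in
/-- invertibility of `ψ_i` and explicit formulas for its inverse. -/
theorem statement_1 {I : Type} [Fintype I] [DecidableEq I] (M : CoxM I) (hsmall : M.Small)
    (R : Type) [CommRing R] (a b c d : R) (f : I → (VV M R →ₗ[R] R)) (i : I)
    (hb : IsUnit b) (hc : IsUnit c) (hd : IsUnit d)
    (hf : IsUnit (f i (ev M R (simplePos M i)))) :
    ∃ psiinv : VV M R →ₗ[R] VV M R,
      (psim M R a b c d f i).comp psiinv = LinearMap.id ∧
      psiinv.comp (psim M R a b c d f i) = LinearMap.id ∧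
      psiinv (ev M R (simplePos M i))
        = Ring.inverse (f i (ev M R (simplePos M i))) • ev M R (simplePos M i) ∧
      (∀ α : Pos M, srefl M i α.1 = α.1 → α.1 ≠ sroot i →
        psiinv (ev M R α) = Ring.inverse d •
          (ev M R α - (Ring.inverse (f i (ev M R (simplePos M i))) * f i (ev M R α)) •
            ev M R (simplePos M i))) ∧
      (∀ α β : Pos M, β.1 = srefl M i α.1 → dep M β.1 = dep M α.1 + 1 →
        psiinv (ev M R β) = Ring.inverse c •
          (ev M R α - (Ring.inverse b * a) • ev M R β
            + (Ring.inverse (b * f i (ev M R (simplePos M i)))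
                * (a * f i (ev M R β) - b * f i (ev M R α))) • ev M R (simplePos M i)) ∧
        psiinv (ev M R α) = Ring.inverse b •
          (ev M R β - (Ring.inverse (f i (ev M R (simplePos M i))) * f i (ev M R β)) •
            ev M R (simplePos M i))) := by
  classical
  refine ⟨LKAux.psiInv M R a b c d f i, ?_, ?_, ?_, ?_, ?_⟩
  · apply Finsupp.lhom_ext
    intro α r
    have hsing : (Finsupp.single α r : VV M R) = r • ev M R α := by
      rw [ev, Finsupp.smul_single, smul_eq_mul, mul_one]
    rw [LinearMap.comp_apply, hsing, map_smul, map_smul,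
      LKAux.comp_left M R a b c d f i hsmall hb hc hd hf α, LinearMap.id_apply]
  · apply Finsupp.lhom_ext
    intro α r
    have hsing : (Finsupp.single α r : VV M R) = r • ev M R α := by
      rw [ev, Finsupp.smul_single, smul_eq_mul, mul_one]
    rw [LinearMap.comp_apply, hsing, map_smul, map_smul,
      LKAux.comp_right M R a b c d f i hsmall hb hc hd hf α, LinearMap.id_apply]
  · rw [LKAux.psiInv_ev, LKAux.invAux_sroot M R a b c d f i _ rfl]
  · intro α hfix hne
    rw [LKAux.psiInv_ev, LKAux.invAux_fix M R a b c d f i α hne hfix]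
  · intro α β hβ hdep
    have hβn : β.1 ≠ sroot i := by rw [hβ]; exact LKAux.srefl_ne_sroot M i α
    have hαβ : α.1 = srefl M i β.1 := by rw [hβ, LKAux.srefl_invol]
    have hβf : srefl M i β.1 ≠ β.1 := by
      rw [← hαβ]
      intro hh
      rw [← hh] at hdep
      omega
    have h1 : α.1 ≠ sroot i := by
      intro hh
      have hβ1 : β.1 = -sroot i := by rw [hβ, hh, LKAux.srefl_sroot_self]
      have h0 := β.2.2 i
      rw [hβ1] at h0
      simp [sroot] at h0
      linarith
    have h2 : srefl M i α.1 ≠ α.1 := by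
      rw [← hβ]
      intro hh
      rw [hh] at hdep
      omega
    constructor
    · rw [LKAux.psiInv_ev, LKAux.invAux_deep M R a b c d f i β α hαβ hβn hβf (by omega)]
    · rw [LKAux.psiInv_ev, LKAux.invAux_shallow M R a b c d f i α β hβ h1 h2 (by omega)]
end

section
/- Let i, j ∈ I with i ≠ j, and assume 𝔡(𝔞−𝔡)+𝔟𝔠 = 0 and f_i(e_{α_j}) = f_j(e_{α_i}) = 0. (i) If m_{i,j} = 2, then ψ_iψ_j = ψ_jψ_i if and only if f_i∘φ_j = 𝔡f_i and f_j∘φ_i = 𝔡f_j. (ii) If m_{i,j} = 3, then f_i∘φ_j = f_j∘φ_i implies ψ_iψ_jψ_i = ψ_jψ_iψ_j; conversely, if 𝔠 is a unit of 𝔯, then ψ_iψ_jψ_i = ψ_jψ_iψ_j implies f_i∘φ_j = f_j∘φ_i. -/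
set_option maxRecDepth 4000

namespace LK

variable {I : Type}

/-!
The maps `φ_i` act on a basis vector `e_α` by a formula that depends only on the sign of
`(α|α_i)`, because `dep(s_i α) - dep(α)` has the sign of `-(α|α_i)`; this rests on the
dichotomy `Φ = Φ⁺ ⊔ -Φ⁺`, proved with the length function of `W`. On the span of a
`⟨s_i, s_j⟩`-orbit of roots, `φ_i` and `φ_j` are therefore given by universal formulas in
`x = (α|α_i)` and `y = (α|α_j)`, so `φ_iφ_j = φ_jφ_i` (`m = 2`), `φ_iφ_jφ_i = φ_jφ_iφ_j`
(`m = 3`) and `φ_i² = 𝔞φ_i + 𝔟𝔠` away from `e_{α_i}` become identities checked sign case by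
sign case, with `𝔡(𝔞−𝔡) + 𝔟𝔠 = 0` as the only input. Expanding `ψ_i = φ_i + f_i ⊠ e_{α_i}`,
the two sides of each braid relation then differ by a combination of `e_{α_i}`, `e_{α_j}` (and
`e_{α_i+α_j}` when `m = 3`) whose coefficients are the stated conditions on the `f_i`.
-/
theorem CoxM.ne_of_ne_one (M : CoxM I) {i j : I} (h : M.m i j ≠ 1) : i ≠ j :=
  fun hij => h ((M.one_iff i j).2 hij)

section SimpleRoots

variable [DecidableEq I]

theorem sroot_ne_sroot {i j : I} (hij : i ≠ j) : sroot i ≠ (sroot j : I → ℝ) := fun h => by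
  simpa [sroot, hij] using congrFun h i

theorem add_sroot_ne_sroot_left (i j : I) : sroot i + sroot j ≠ (sroot i : I → ℝ) := fun h => by
  simpa [sroot] using congrFun h j

theorem add_sroot_ne_sroot_right (i j : I) : sroot i + sroot j ≠ (sroot j : I → ℝ) := fun h => by
  simpa [sroot] using congrFun h i

theorem sroot_nonneg (i : I) : 0 ≤ (sroot i : I → ℝ) := Pi.single_nonneg.2 zero_le_one

theorem sroot_ne_zero (i : I) : (sroot i : I → ℝ) ≠ 0 := by
  simp [sroot]

end SimpleRoots

section Reflections

variable (M : CoxM I)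

theorem cf_symm (i j : I) : cf M i j = cf M j i := by rw [cf, cf, M.symm]

theorem cf_self (i : I) : cf M i i = 2 := by
  rw [cf, (M.one_iff i i).2 rfl]; norm_num

theorem cf_of_two {i j : I} (h : M.m i j = 2) : cf M i j = 0 := by
  rw [cf, h]; norm_num [Real.cos_pi_div_two]

theorem cf_of_three {i j : I} (h : M.m i j = 3) : cf M i j = -1 := by
  rw [cf, h]; norm_num [Real.cos_pi_div_three]

theorem cf_nonpos (hs : M.Small) {i j : I} (hij : i ≠ j) : cf M i j ≤ 0 := by
  rcases hs i j with h | h | h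
  · exact absurd ((M.one_iff i j).1 h) hij
  · rw [cf_of_two M h]
  · rw [cf_of_three M h]; norm_num

section Form

variable [Fintype I]

theorem bform_add_left (x y z : I → ℝ) : bform M (x + y) z = bform M x z + bform M y z := by
  simp [bform, add_mul, Finset.sum_add_distrib]

theorem bform_smul_left (r : ℝ) (x z : I → ℝ) : bform M (r • x) z = r * bform M x z := by
  simp [bform, Finset.mul_sum, mul_assoc]

theorem bform_sub_left (x y z : I → ℝ) : bform M (x - y) z = bform M x z - bform M y z := by
  simp [bform, sub_mul, Finset.sum_sub_distrib]

theorem bform_comm (x y : I → ℝ) : bform M x y = bform M y x := by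
  rw [bform, bform, Finset.sum_comm]
  exact Finset.sum_congr rfl fun i _ => Finset.sum_congr rfl fun j _ => by rw [cf_symm]; ring

end Form

variable [Fintype I] [DecidableEq I]

theorem bform_sroot (v : I → ℝ) (j : I) : bform M v (sroot j) = ∑ k, v k * cf M k j := by
  refine Finset.sum_congr rfl fun k _ => ?_
  rw [Finset.sum_eq_single j] <;> simp +contextual [sroot]

theorem bform_sroot_sroot (i j : I) : bform M (sroot i) (sroot j) = cf M i j := by
  rw [bform_sroot, Finset.sum_eq_single i] <;> simp +contextual [sroot]

theorem bform_srefl_left (i : I) (v w : I → ℝ) :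
    bform M (srefl M i v) w = bform M v w - bform M v (sroot i) * bform M (sroot i) w := by
  rw [srefl, bform_sub_left, bform_smul_left]

theorem bform_srefl_sroot (i j : I) (v : I → ℝ) :
    bform M (srefl M i v) (sroot j) = bform M v (sroot j) - bform M v (sroot i) * cf M i j := by
  rw [bform_srefl_left, bform_sroot_sroot]

theorem bform_srefl_sroot_self (i : I) (v : I → ℝ) :
    bform M (srefl M i v) (sroot i) = -bform M v (sroot i) := by
  rw [bform_srefl_sroot, cf_self]; ring

theorem bform_srefl_srefl (i : I) (v w : I → ℝ) :
    bform M (srefl M i v) (srefl M i w) = bform M v w := by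
  rw [bform_srefl_left, bform_comm M v, bform_comm M (sroot i), bform_srefl_left,
    bform_srefl_sroot_self, bform_comm M w v, bform_comm M (sroot i) v]
  ring

theorem srefl_srefl (i : I) (v : I → ℝ) : srefl M i (srefl M i v) = v := by
  rw [srefl.eq_1 M i (srefl M i v), bform_srefl_sroot_self, srefl]; module

theorem srefl_eq_iff (i : I) {v w : I → ℝ} : srefl M i v = w ↔ v = srefl M i w :=
  ⟨fun h => h ▸ (srefl_srefl M i v).symm, fun h => h ▸ srefl_srefl M i w⟩

theorem srefl_neg (i : I) (v : I → ℝ) : srefl M i (-v) = -srefl M i v := by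
  rw [srefl, srefl, show -v = (-1 : ℝ) • v by simp, bform_smul_left]; module

theorem srefl_sroot_self (i : I) : srefl M i (sroot i) = -sroot i := by
  rw [srefl, bform_sroot_sroot, cf_self]; module

theorem srefl_eq_self_iff (i : I) (v : I → ℝ) : srefl M i v = v ↔ bform M v (sroot i) = 0 := by
  refine ⟨fun h => ?_, fun h => by rw [srefl, h, zero_smul, sub_zero]⟩
  simpa [srefl, sroot] using congrFun h i

theorem srefl_apply_of_ne (i : I) (v : I → ℝ) {k : I} (h : k ≠ i) : srefl M i v k = v k := by
  simp [srefl, sroot, h]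

theorem srefl_sroot_of_two {s t : I} (h : M.m s t = 2) : srefl M t (sroot s) = sroot s := by
  rw [srefl_eq_self_iff, bform_sroot_sroot, cf_of_two M h]

theorem srefl_sroot_of_three {s t : I} (h : M.m s t = 3) :
    srefl M t (sroot s) = sroot s + sroot t := by
  rw [srefl, bform_sroot_sroot, cf_of_three M h]; module

theorem srefl_add_sroot_of_three {s t : I} (h : M.m s t = 3) :
    srefl M s (sroot s + sroot t) = sroot t := by
  rw [srefl, bform_add_left, bform_sroot_sroot, bform_sroot_sroot, cf_self,
    cf_of_three M ((M.symm t s).trans h)]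
  module

theorem srefl_comm {i j : I} (h : M.m i j = 2) (v : I → ℝ) :
    srefl M i (srefl M j v) = srefl M j (srefl M i v) := by
  rw [srefl.eq_1 M i, srefl.eq_1 M j (srefl M i v), bform_srefl_sroot, bform_srefl_sroot,
    cf_of_two M h, cf_of_two M ((M.symm j i).trans h), srefl, srefl]
  module

theorem srefl_braid {i j : I} (h : M.m i j = 3) (v : I → ℝ) :
    srefl M i (srefl M j (srefl M i v)) = srefl M j (srefl M i (srefl M j v)) := by
  simp only [srefl, bform_sub_left, bform_smul_left, bform_sroot_sroot, cf_of_three M h,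
    cf_of_three M ((M.symm j i).trans h), cf_self]
  module

variable {M}

theorem srefl_ne_sroot_self {v : I → ℝ} {i : I} (h : v ≠ -sroot i) : srefl M i v ≠ sroot i := by
  rwa [Ne, srefl_eq_iff, srefl_sroot_self]

theorem srefl_ne_neg_sroot_self {v : I → ℝ} {i : I} (h : v ≠ sroot i) :
    srefl M i v ≠ -sroot i := by
  rwa [Ne, srefl_eq_iff, srefl_neg, srefl_sroot_self, neg_neg]

end Reflections

def CoxM.toCoxeterMatrix (M : CoxM I) : CoxeterMatrix I where
  M := Matrix.of M.m
  isSymm := Matrix.IsSymm.ext fun i j => M.symm j i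
  diagonal i := (M.one_iff i i).2 rfl
  off_diagonal i j h := mt (M.one_iff i j).1 h

@[simp]
theorem CoxM.toCoxeterMatrix_apply (M : CoxM I) (i j : I) : M.toCoxeterMatrix i j = M.m i j := rfl

abbrev CoxM.coxeterSystem (M : CoxM I) : CoxeterSystem M.toCoxeterMatrix M.toCoxeterMatrix.Group :=
  M.toCoxeterMatrix.toCoxeterSystem

section CoxeterGroup

variable (M : CoxM I)

local notation "σ" => CoxeterSystem.simple (CoxM.coxeterSystem M)
local notation "ℓ" => CoxeterSystem.length (CoxM.coxeterSystem M)

theorem simple_mul_simple_comm {s t : I} (h : M.m s t = 2) : σ s * σ t = σ t * σ s := by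
  simpa [CoxeterSystem.braidWord, CoxeterSystem.alternatingWord, CoxeterSystem.wordProd,
    M.symm t s, h] using M.coxeterSystem.wordProd_braidWord_eq s t

theorem simple_braid {s t : I} (h : M.m s t = 3) : σ s * σ t * σ s = σ t * σ s * σ t := by
  simpa [CoxeterSystem.braidWord, CoxeterSystem.alternatingWord, CoxeterSystem.wordProd,
    M.symm t s, h, mul_assoc] using M.coxeterSystem.wordProd_braidWord_eq t s

theorem length_mul_simple_le (w : M.toCoxeterMatrix.Group) (s : I) : ℓ (w * σ s) ≤ ℓ w + 1 := by
  rcases M.coxeterSystem.length_mul_simple w s with h | h <;> omega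

theorem length_lt_length_mul_simple_of_two {s t : I} (h : M.m s t = 2)
    {w : M.toCoxeterMatrix.Group} (hwt : ℓ w < ℓ (w * σ t))
    (hwts : ℓ (w * σ t) < ℓ (w * σ t * σ s)) : ℓ w < ℓ (w * σ s) := by
  rw [mul_assoc, ← simple_mul_simple_comm M h, ← mul_assoc] at hwts
  have := length_mul_simple_le M (w * σ s) t
  rcases M.coxeterSystem.length_mul_simple w s with h' | h' <;> omega

theorem length_lt_length_mul_simple_of_three {s t : I} (h : M.m s t = 3)
    {u : M.toCoxeterMatrix.Group} (hus : ℓ u < ℓ (u * σ s))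
    (hust : ℓ (u * σ s) < ℓ (u * σ s * σ t))
    (husts : ℓ (u * σ s * σ t) < ℓ (u * σ s * σ t * σ s)) : ℓ u < ℓ (u * σ t) := by
  have hbraid : u * σ s * σ t * σ s = u * σ t * σ s * σ t := by
    simp only [mul_assoc, ← simple_braid M h]
  rw [hbraid] at husts
  have := length_mul_simple_le M (u * σ t * σ s) t
  have := length_mul_simple_le M (u * σ t) s
  have := length_mul_simple_le M (u * σ s) t
  have := length_mul_simple_le M u s
  rcases M.coxeterSystem.length_mul_simple u t with h' | h' <;> omega

variable [Fintype I] [DecidableEq I]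

noncomputable def sreflLin (i : I) : Module.End ℝ (I → ℝ) where
  toFun := srefl M i
  map_add' v w := by simp only [srefl, bform_add_left, add_smul]; abel
  map_smul' r v := by simp only [srefl, bform_smul_left, smul_sub, smul_smul, RingHom.id_apply]

theorem sreflLin_apply (i : I) (v : I → ℝ) : sreflLin M i v = srefl M i v := rfl

theorem isLiftable_sreflLin (hs : M.Small) : M.toCoxeterMatrix.IsLiftable (sreflLin M) := by
  intro i j
  refine LinearMap.ext fun v => ?_
  rcases hs i j with h | h | h <;>
    simp only [CoxM.toCoxeterMatrix_apply, h, pow_succ, pow_zero, one_mul, Module.End.mul_apply,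
      sreflLin_apply, Module.End.one_apply]
  · rw [(M.one_iff i j).1 h, srefl_srefl]
  · rw [← srefl_comm M h, srefl_srefl, srefl_srefl]
  · rw [← srefl_braid M h, srefl_srefl, srefl_srefl, srefl_srefl]

noncomputable def reflRep (hs : M.Small) : M.toCoxeterMatrix.Group →* Module.End ℝ (I → ℝ) :=
  M.coxeterSystem.lift ⟨sreflLin M, isLiftable_sreflLin M hs⟩

theorem reflRep_simple (hs : M.Small) (i : I) (v : I → ℝ) :
    reflRep M hs (σ i) v = srefl M i v := by
  rw [reflRep, CoxeterSystem.lift_apply_simple, sreflLin_apply]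

theorem reflRep_mul_simple (hs : M.Small) (w : M.toCoxeterMatrix.Group) (i : I) (v : I → ℝ) :
    reflRep M hs (w * σ i) v = reflRep M hs w (srefl M i v) := by
  rw [map_mul, Module.End.mul_apply, reflRep_simple]

theorem reflRep_wordProd (hs : M.Small) (l : List I) (v : I → ℝ) :
    reflRep M hs (M.coxeterSystem.wordProd l) v = l.foldr (srefl M) v := by
  induction l with
  | nil => simp
  | cons i l ih =>
    rw [CoxeterSystem.wordProd_cons, map_mul, Module.End.mul_apply, ih, reflRep_simple,
      List.foldr_cons]

/-- Induction on `ℓ w` along a right descent `t ≠ s` of `w = w' s_t`: then `w(α_s)` is `w'(α_s)`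
(`m = 2`), `w'(α_s) + w'(α_t)` (`m = 3`), or `u(α_t)` when moreover `w' = u s_s`, and the
length hypotheses needed for `w'` and `u` come from the braid relation. -/
theorem reflRep_sroot_nonneg (hs : M.Small) (w : M.toCoxeterMatrix.Group) (s : I)
    (hws : ℓ w < ℓ (w * σ s)) : 0 ≤ reflRep M hs w (sroot s) := by
  induction hn : ℓ w using Nat.strong_induction_on generalizing w s with
  | _ n ih =>
  obtain rfl | hw := eq_or_ne w 1
  · simpa using sroot_nonneg s
  obtain ⟨t, ht⟩ := M.coxeterSystem.exists_rightDescent_of_ne_one hw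
  obtain ⟨w, rfl⟩ : ∃ w', w = w' * σ t :=
    ⟨_, (M.coxeterSystem.simple_mul_simple_cancel_right t).symm⟩
  rw [CoxeterSystem.IsRightDescent, CoxeterSystem.simple_mul_simple_cancel_right] at ht
  have hst : s ≠ t := by
    rintro rfl; rw [CoxeterSystem.simple_mul_simple_cancel_right] at hws; omega
  rcases hs s t with h | h | h
  · exact absurd ((M.one_iff s t).1 h) hst
  · rw [reflRep_mul_simple, srefl_sroot_of_two M h]
    exact ih _ (by omega) w s (length_lt_length_mul_simple_of_two M h ht hws) rfl
  rcases M.coxeterSystem.length_mul_simple w s with hws' | hws'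
  · rw [reflRep_mul_simple, srefl_sroot_of_three M h, map_add]
    exact add_nonneg (ih _ (by omega) w s (by omega) rfl) (ih _ (by omega) w t ht rfl)
  obtain ⟨u, rfl⟩ : ∃ u, w = u * σ s :=
    ⟨_, (M.coxeterSystem.simple_mul_simple_cancel_right s).symm⟩
  rw [CoxeterSystem.simple_mul_simple_cancel_right] at hws'
  rw [reflRep_mul_simple, reflRep_mul_simple, srefl_sroot_of_three M h,
    srefl_add_sroot_of_three M h]
  exact ih _ (by omega) u t (length_lt_length_mul_simple_of_three M h (by omega) ht hws) rfl

end CoxeterGroup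

section Roots

variable [Fintype I] [DecidableEq I] {M : CoxM I}

theorem IsRoot.exists_reflRep_sroot (hs : M.Small) {v : I → ℝ} (hv : IsRoot M v) :
    ∃ w s, reflRep M hs w (sroot s) = v := by
  induction hv with
  | simple s => exact ⟨1, s, by simp⟩
  | srefl i v _ ih =>
    obtain ⟨w, s, rfl⟩ := ih
    exact ⟨M.coxeterSystem.simple i * w, s, by
      rw [map_mul, Module.End.mul_apply, reflRep_simple]⟩

theorem IsRoot.nonneg_or_nonpos (hs : M.Small) {v : I → ℝ} (hv : IsRoot M v) :
    0 ≤ v ∨ v ≤ 0 := by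
  obtain ⟨w, s, rfl⟩ := hv.exists_reflRep_sroot hs
  rcases M.coxeterSystem.length_mul_simple w s with h | h
  · exact .inl (reflRep_sroot_nonneg M hs w s (by omega))
  · right
    obtain ⟨u, rfl⟩ : ∃ u, w = u * M.coxeterSystem.simple s :=
      ⟨_, (M.coxeterSystem.simple_mul_simple_cancel_right s).symm⟩
    rw [CoxeterSystem.simple_mul_simple_cancel_right] at h
    rw [reflRep_mul_simple, srefl_sroot_self, map_neg, neg_nonpos]
    exact reflRep_sroot_nonneg M hs u s (by omega)

theorem IsRoot.bform_self {v : I → ℝ} (hv : IsRoot M v) : bform M v v = 2 := by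
  induction hv with
  | simple i => rw [bform_sroot_sroot, cf_self]
  | srefl i v _ ih => rw [bform_srefl_srefl, ih]

theorem IsRoot.ne_zero {v : I → ℝ} (hv : IsRoot M v) : v ≠ 0 := by
  rintro rfl
  simpa [bform] using hv.bform_self

theorem exists_foldr_srefl_neg (hs : M.Small) {v : I → ℝ} (hv : IsRoot M v) :
    ∃ l : List I, ∃ k, l.foldr (srefl M) v k < 0 := by
  obtain ⟨w, s, rfl⟩ := hv.exists_reflRep_sroot hs
  obtain ⟨l, hl⟩ := M.coxeterSystem.wordProd_surjective w⁻¹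
  refine ⟨s :: l, s, ?_⟩
  rw [List.foldr_cons, ← reflRep_wordProd M hs, hl, ← Module.End.mul_apply, ← map_mul,
    inv_mul_cancel, map_one, Module.End.one_apply, srefl_sroot_self]
  simp [sroot]

theorem IsPos.ne_neg {v w : I → ℝ} (hv : IsPos M v) (hw : 0 ≤ w) (hw0 : w ≠ 0) : v ≠ -w := by
  rintro rfl
  exact hw0 (le_antisymm (neg_nonneg.1 (hv.2 : 0 ≤ -w)) hw)

theorem IsPos.ne_neg_sroot {v : I → ℝ} (hv : IsPos M v) (i : I) : v ≠ -sroot i :=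
  hv.ne_neg (sroot_nonneg i) (sroot_ne_zero i)

theorem IsPos.srefl_of_ne (hs : M.Small) {v : I → ℝ} (hv : IsPos M v) {i : I}
    (hvi : v ≠ sroot i) : IsPos M (srefl M i v) := by
  refine ⟨.srefl i v hv.1, ?_⟩
  refine ((IsRoot.srefl i v hv.1).nonneg_or_nonpos hs).resolve_right fun hneg => hvi ?_
  -- `s_i` only changes the `i`-th coordinate, so `v` would be a positive multiple of `α_i`
  have hv_eq : v = v i • sroot i := by
    funext k
    by_cases hk : k = i
    · simp [hk, sroot]
    · have := hneg k
      rw [Pi.zero_apply, srefl_apply_of_ne M i v hk] at this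
      simp [sroot, hk, le_antisymm this (hv.2 k)]
  have hnorm := hv.1.bform_self
  rw [hv_eq, bform_smul_left, bform_comm, bform_smul_left, bform_sroot_sroot, cf_self] at hnorm
  have hvi1 : v i = 1 := by nlinarith [hv.2 i]
  rw [hv_eq, hvi1, one_smul]

theorem isPos_add_sroot (hs : M.Small) {i j : I} (h : M.m i j = 3) :
    IsPos M (sroot i + sroot j) := by
  rw [← srefl_sroot_of_three M h]
  exact (isPos_sroot M i).srefl_of_ne hs (sroot_ne_sroot (M.ne_of_ne_one (by omega)))

end Roots

section Depth

variable [Fintype I] [DecidableEq I] {M : CoxM I}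

theorem dep_le_length {v : I → ℝ} {l : List I} (h : ∃ k, l.foldr (srefl M) v k < 0) :
    dep M v ≤ l.length :=
  Nat.sInf_le ⟨l, rfl, h⟩

theorem exists_length_eq_dep (hs : M.Small) {v : I → ℝ} (hv : IsRoot M v) :
    ∃ l : List I, l.length = dep M v ∧ ∃ k, l.foldr (srefl M) v k < 0 := by
  obtain ⟨l, hl⟩ := exists_foldr_srefl_neg hs hv
  exact Nat.sInf_mem (s := {n | ∃ l : List I, l.length = n ∧ ∃ k, l.foldr (srefl M) v k < 0})
    ⟨_, l, rfl, hl⟩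

theorem dep_srefl_le (hs : M.Small) {v : I → ℝ} (hv : IsRoot M v) (i : I) :
    dep M (srefl M i v) ≤ dep M v + 1 := by
  obtain ⟨l, hl, hneg⟩ := exists_length_eq_dep hs hv
  have := dep_le_length (M := M) (v := srefl M i v) (l := l ++ [i])
    (by simpa [List.foldr_append, srefl_srefl] using hneg)
  simpa [hl] using this

theorem dep_le_dep_srefl (hs : M.Small) {v : I → ℝ} (hv : IsRoot M v) (i : I) :
    dep M v ≤ dep M (srefl M i v) + 1 := by
  simpa [srefl_srefl] using dep_srefl_le hs (IsRoot.srefl i v hv) i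

theorem IsPos.one_le_dep (hs : M.Small) {v : I → ℝ} (hv : IsPos M v) : 1 ≤ dep M v := by
  obtain ⟨l, hl, k, hk⟩ := exists_length_eq_dep hs hv.1
  rcases l with _ | ⟨i, l⟩
  · exact absurd hk (not_lt.2 (hv.2 k))
  · simp [← hl]

theorem dep_sroot (hs : M.Small) (s : I) : dep M (sroot s) = 1 := by
  refine le_antisymm (dep_le_length (l := [s]) ⟨s, ?_⟩) ((isPos_sroot M s).one_le_dep hs)
  rw [List.foldr_cons, List.foldr_nil, srefl_sroot_self]
  simp [sroot]

theorem IsPos.exists_dep_srefl_add_one (hs : M.Small) {v : I → ℝ} (hv : IsPos M v) :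
    ∃ t, dep M (srefl M t v) + 1 = dep M v := by
  obtain ⟨l, hl, hneg⟩ := exists_length_eq_dep hs hv.1
  obtain rfl | ⟨l, t, rfl⟩ := l.eq_nil_or_concat
  · have := hv.one_le_dep hs; simp at hl; omega
  refine ⟨t, le_antisymm ?_ (dep_le_dep_srefl hs hv.1 t)⟩
  have := dep_le_length (M := M) (v := srefl M t v) (l := l)
    (by simpa [List.foldr_append] using hneg)
  simp at hl
  omega

def DepDescentBelow (M : CoxM I) (n : ℕ) : Prop :=
  ∀ ⦃v : I → ℝ⦄, IsPos M v → dep M v < n → ∀ ⦃s : I⦄, 0 < bform M v (sroot s) → v ≠ sroot s →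
    dep M (srefl M s v) < dep M v

theorem bform_sroot_pos_of_dep_srefl (hs : M.Small) {v : I → ℝ} (hv : IsPos M v)
    (ih : DepDescentBelow M (dep M v)) {t : I} (hvt : v ≠ sroot t)
    (ht : dep M (srefl M t v) + 1 = dep M v) : 0 < bform M v (sroot t) := by
  rcases lt_trichotomy (bform M v (sroot t)) 0 with h | h | h
  · have := ih (hv.srefl_of_ne hs hvt) (by omega) (by rw [bform_srefl_sroot_self]; linarith)
      (srefl_ne_sroot_self (hv.ne_neg_sroot t))
    rw [srefl_srefl] at this
    omega
  · rw [(srefl_eq_self_iff M t v).2 h] at ht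
    omega
  · exact h

theorem dep_srefl_lt_of_two (hs : M.Small) {v : I → ℝ} (hv : IsPos M v)
    (ih : DepDescentBelow M (dep M v)) {s t : I} (h : M.m s t = 2)
    (hvs : 0 < bform M v (sroot s)) (hne : v ≠ sroot s) (hvt : v ≠ sroot t)
    (ht : dep M (srefl M t v) + 1 = dep M v) : dep M (srefl M s v) < dep M v := by
  have := ih (hv.srefl_of_ne hs hvt) (by omega)
    (by rw [bform_srefl_sroot, cf_of_two M ((M.symm t s).trans h)]; linarith)
    (by rwa [Ne, srefl_eq_iff, srefl_sroot_of_two M h])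
  rw [srefl_comm M h] at this
  have := dep_le_dep_srefl hs (IsRoot.srefl s v hv.1) t
  omega

theorem dep_srefl_lt_of_three (hs : M.Small) {v : I → ℝ} (hv : IsPos M v)
    (ih : DepDescentBelow M (dep M v)) {s t : I} (h : M.m s t = 3)
    (hvs : 0 < bform M v (sroot s)) (hvt_pos : 0 < bform M v (sroot t)) (hne : v ≠ sroot s)
    (hvt : v ≠ sroot t) (ht : dep M (srefl M t v) + 1 = dep M v) :
    dep M (srefl M s v) < dep M v := by
  have hts : M.m t s = 3 := (M.symm t s).trans h
  have hv' := hv.srefl_of_ne hs hvt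
  by_cases hv's : srefl M t v = sroot s
  · rw [srefl_eq_iff, srefl_sroot_of_three M h] at hv's
    subst hv's
    rw [add_comm (sroot s), srefl_add_sroot_of_three M hts, dep_sroot hs, add_comm (sroot t)] at ht
    rw [srefl_add_sroot_of_three M h, dep_sroot hs]
    omega
  -- descend along `t`, `s`, `t`, and use `s_t s_s s_t = s_s s_t s_s`
  have h₁ := ih hv' (by omega)
    (by rw [bform_srefl_sroot, cf_of_three M hts]; linarith) hv's
  have h₂ := ih (s := t) (hv'.srefl_of_ne hs hv's) (by omega)
    (by simp only [bform_srefl_sroot, cf_of_three M h, cf_of_three M hts, cf_self]; linarith)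
    (by rwa [Ne, srefl_eq_iff, srefl_sroot_of_three M hts, srefl_eq_iff,
      srefl_add_sroot_of_three M hts])
  rw [srefl_braid M hts] at h₂
  have := dep_le_dep_srefl hs (IsRoot.srefl s v hv.1) t
  have := dep_le_dep_srefl hs (IsRoot.srefl t _ (IsRoot.srefl s v hv.1)) s
  omega

theorem dep_srefl_lt (hs : M.Small) {v : I → ℝ} (hv : IsPos M v) {s : I}
    (hvs : 0 < bform M v (sroot s)) (hne : v ≠ sroot s) : dep M (srefl M s v) < dep M v := by
  induction hn : dep M v using Nat.strong_induction_on generalizing v s with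
  | _ n ih =>
  have ih' : DepDescentBelow M (dep M v) := fun w hw hwn s hws hne =>
    ih _ (hn ▸ hwn) hw hws hne rfl
  subst hn
  obtain ⟨t, ht⟩ := hv.exists_dep_srefl_add_one hs
  obtain rfl | hvt := eq_or_ne v (sroot t)
  · have hts : t ≠ s := by rintro rfl; exact hne rfl
    rw [bform_sroot_sroot] at hvs
    exact absurd hvs (not_lt.2 (cf_nonpos M hs hts))
  obtain rfl | hts := eq_or_ne t s
  · omega
  rcases hs s t with h | h | h
  · exact absurd ((M.one_iff s t).1 h) hts.symm
  · exact dep_srefl_lt_of_two hs hv ih' h hvs hne hvt ht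
  · exact dep_srefl_lt_of_three hs hv ih' h hvs (bform_sroot_pos_of_dep_srefl hs hv ih' hvt ht)
      hne hvt ht

theorem lt_dep_srefl (hs : M.Small) {v : I → ℝ} (hv : IsPos M v) {s : I}
    (hvs : bform M v (sroot s) < 0) : dep M v < dep M (srefl M s v) := by
  have hne : v ≠ sroot s := by
    rintro rfl
    rw [bform_sroot_sroot, cf_self] at hvs
    norm_num at hvs
  simpa [srefl_srefl] using dep_srefl_lt hs (hv.srefl_of_ne hs hne)
    (by rw [bform_srefl_sroot_self]; linarith) (srefl_ne_sroot_self (hv.ne_neg_sroot s))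

end Depth

section LocalFormula

variable {R : Type} [CommRing R] {N : Type} [AddCommGroup N] [Module R N] (a b c d : R)

/-- `φ_i(e_α)` in terms of the sign of `x = (α|α_i)`, with `u = e_α` and `v = e_{s_i(α)}`. -/
noncomputable def phiLocal (x : ℝ) (u v : N) : N :=
  if x < 0 then a • u + c • v else if x = 0 then d • u else b • v

variable {a b c d}

theorem phiLocal_of_neg {x : ℝ} (hx : x < 0) (u v : N) : phiLocal a b c d x u v = a • u + c • v :=
  if_pos hx

theorem phiLocal_of_eq_zero {x : ℝ} (hx : x = 0) (u v : N) : phiLocal a b c d x u v = d • u := by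
  rw [phiLocal, if_neg (not_lt.2 hx.ge), if_pos hx]

theorem phiLocal_of_pos {x : ℝ} (hx : 0 < x) (u v : N) : phiLocal a b c d x u v = b • v := by
  rw [phiLocal, if_neg (not_lt.2 hx.le), if_neg hx.ne']

theorem phiLocal_sq (hrel : d * (a - d) + b * c = 0) {P : N →ₗ[R] N} {x : ℝ} {u v : N}
    (hu : P u = phiLocal a b c d x u v) (hv : P v = phiLocal a b c d (-x) v u) :
    P (P u) = a • P u + (b * c) • u := by
  rcases lt_trichotomy x 0 with hx | hx | hx
  · rw [hu, phiLocal_of_neg hx, map_add, map_smul, map_smul, hu, hv, phiLocal_of_neg hx,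
      phiLocal_of_pos (by linarith)]
    module
  · rw [hu, phiLocal_of_eq_zero hx, map_smul, hu, phiLocal_of_eq_zero hx, smul_smul, smul_smul,
      ← add_smul]
    congr 1
    linear_combination -hrel
  · rw [hu, phiLocal_of_pos hx, map_smul, hv, phiLocal_of_neg (by linarith)]
    module

theorem phiLocal_comm {P Q : N →ₗ[R] N} {x y : ℝ} {u ui uj uij : N}
    (hPu : P u = phiLocal a b c d x u ui) (hPuj : P uj = phiLocal a b c d x uj uij)
    (hQu : Q u = phiLocal a b c d y u uj) (hQui : Q ui = phiLocal a b c d y ui uij) :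
    P (Q u) = Q (P u) := by
  rcases lt_trichotomy x 0 with hx | hx | hx <;> rcases lt_trichotomy y 0 with hy | hy | hy <;>
    simp only [hPu, hPuj, hQu, hQui, map_add, map_smul, phiLocal_of_neg, phiLocal_of_eq_zero,
      phiLocal_of_pos, hx, hy] <;>
    module

/-- The model for `φ_i`, `φ_j` with `m_{i,j} = 3` on the orbit `e_α, e_{s_iα}, e_{s_jα},
e_{s_js_iα}, e_{s_is_jα}, e_{s_is_js_iα}` (the vectors `u, ui, uj, uji, uij, w`), where
`x = (α|α_i)` and `y = (α|α_j)`. -/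
theorem phiLocal_braid (hrel : d * (a - d) + b * c = 0) {P Q : N →ₗ[R] N} {x y : ℝ}
    {u ui uj uji uij w : N}
    (hPu : P u = phiLocal a b c d x u ui) (hPui : P ui = phiLocal a b c d (-x) ui u)
    (hPuj : P uj = phiLocal a b c d (x + y) uj uij) (hPuji : P uji = phiLocal a b c d y uji w)
    (hQu : Q u = phiLocal a b c d y u uj) (hQuj : Q uj = phiLocal a b c d (-y) uj u)
    (hQui : Q ui = phiLocal a b c d (x + y) ui uji) (hQuij : Q uij = phiLocal a b c d x uij w) :
    P (Q (P u)) = Q (P (Q u)) := by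
  rcases lt_trichotomy x 0 with hx | hx | hx <;> rcases lt_trichotomy y 0 with hy | hy | hy <;>
    rcases lt_trichotomy (x + y) 0 with hxy | hxy | hxy <;>
    first
    | linarith
    | simp only [hPu, hPui, hPuj, hPuji, hQu, hQuj, hQui, hQuij, map_add, map_smul,
        phiLocal_of_neg, phiLocal_of_eq_zero, phiLocal_of_pos, hx, hy, hxy, neg_pos, neg_lt_zero,
        zero_add, add_zero] <;>
      match_scalars <;> first | ring1 | linear_combination a * hrel | linear_combination -a * hrel

end LocalFormula

section PhiOnRoots

variable [Fintype I] [DecidableEq I] (M : CoxM I) (R : Type) [CommRing R] {a b c d : R}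

open Classical in
/-- `e_v` for a positive root `v` and `0` for every other vector, so that `φ_i(e_v)` is given by
`phiLocal` for all `v ≠ ±α_i` (see `phi_eRoot`). -/
noncomputable def eRoot (v : I → ℝ) : VV M R := if h : IsPos M v then ev M R ⟨v, h⟩ else 0

variable {M R}

theorem eRoot_of_isPos {v : I → ℝ} (hv : IsPos M v) : eRoot M R v = ev M R ⟨v, hv⟩ := dif_pos hv

theorem eRoot_val (α : Pos M) : eRoot M R α.1 = ev M R α := dif_pos α.2

theorem eRoot_of_not_isPos {v : I → ℝ} (hv : ¬IsPos M v) : eRoot M R v = 0 := dif_neg hv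

theorem eRoot_sroot (i : I) : eRoot M R (sroot i) = ev M R (simplePos M i) :=
  eRoot_of_isPos (isPos_sroot M i)

theorem eRoot_neg_sroot (i : I) : eRoot M R (-sroot i) = 0 :=
  eRoot_of_not_isPos fun h => h.ne_neg_sroot i rfl

theorem linearMap_ext_eRoot {N : Type} [AddCommMonoid N] [Module R N] {F G : VV M R →ₗ[R] N}
    (h : ∀ v, F (eRoot M R v) = G (eRoot M R v)) : F = G :=
  Finsupp.lhom_ext' fun α => LinearMap.ext_ring <| show F (ev M R α) = G (ev M R α) by
    simpa only [eRoot_val] using h α.1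

theorem phiLocal_zero (x : ℝ) : phiLocal a b c d x (0 : VV M R) 0 = 0 := by
  unfold phiLocal; split_ifs <;> simp

theorem phi_ev (i : I) (α : Pos M) : phi M R a b c d i (ev M R α) = phiAux M R a b c d i α := by
  rw [phi, ev, Finsupp.lift_apply, Finsupp.sum_single_index (by rw [zero_smul]), one_smul]

theorem phi_eRoot_sroot_self (i : I) : phi M R a b c d i (eRoot M R (sroot i)) = 0 := by
  rw [eRoot_sroot, phi_ev, phiAux, if_pos (show (simplePos M i).1 = sroot i from rfl)]

theorem phi_eRoot (hs : M.Small) {i : I} {v : I → ℝ} (hvi : v ≠ sroot i) (hvi' : v ≠ -sroot i) :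
    phi M R a b c d i (eRoot M R v) =
      phiLocal a b c d (bform M v (sroot i)) (eRoot M R v) (eRoot M R (srefl M i v)) := by
  by_cases hv : IsPos M v
  swap
  · have hv' : ¬IsPos M (srefl M i v) := fun h' => hv <| by
      simpa only [srefl_srefl] using h'.srefl_of_ne hs (srefl_ne_sroot_self hvi')
    rw [eRoot_of_not_isPos hv, eRoot_of_not_isPos hv', map_zero, phiLocal_zero]
  have hv' := hv.srefl_of_ne hs hvi
  obtain ⟨α, rfl⟩ : ∃ α : Pos M, α.1 = v := ⟨⟨v, hv⟩, rfl⟩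
  rw [eRoot_val, eRoot_of_isPos hv', phi_ev, phiAux, if_neg hvi]
  rcases lt_trichotomy (bform M α.1 (sroot i)) 0 with hx | hx | hx
  · rw [if_neg (by rw [srefl_eq_self_iff]; exact hx.ne), dif_pos hv',
      if_pos (lt_dep_srefl hs hv hx), phiLocal_of_neg hx]
  · rw [if_pos ((srefl_eq_self_iff M i α.1).2 hx), phiLocal_of_eq_zero hx]
  · rw [if_neg (by rw [srefl_eq_self_iff]; exact hx.ne'), dif_pos hv',
      if_neg (not_lt.2 (dep_srefl_lt hs hv hx hvi).le), phiLocal_of_pos hx]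

theorem phi_eRoot_of_bform_eq_zero (hs : M.Small) {i : I} {v : I → ℝ} (hvi : v ≠ sroot i)
    (hvi' : v ≠ -sroot i) (h : bform M v (sroot i) = 0) :
    phi M R a b c d i (eRoot M R v) = d • eRoot M R v := by
  rw [phi_eRoot hs hvi hvi', phiLocal_of_eq_zero h]

theorem phi_eRoot_srefl_self (hs : M.Small) {i : I} {v : I → ℝ} (hvi : v ≠ sroot i)
    (hvi' : v ≠ -sroot i) :
    phi M R a b c d i (eRoot M R (srefl M i v)) =
      phiLocal a b c d (-bform M v (sroot i)) (eRoot M R (srefl M i v)) (eRoot M R v) := by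
  rw [phi_eRoot hs (srefl_ne_sroot_self hvi') (srefl_ne_neg_sroot_self hvi), srefl_srefl,
    bform_srefl_sroot_self]

end PhiOnRoots

section PhiRelations

variable [Fintype I] [DecidableEq I] {M : CoxM I} {R : Type} [CommRing R] {a b c d : R}

theorem phi_phi_eRoot (hs : M.Small) (hrel : d * (a - d) + b * c = 0) {i : I} {v : I → ℝ}
    (hvi : v ≠ sroot i) (hvi' : v ≠ -sroot i) :
    phi M R a b c d i (phi M R a b c d i (eRoot M R v)) =
      a • phi M R a b c d i (eRoot M R v) + (b * c) • eRoot M R v :=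
  phiLocal_sq hrel (phi_eRoot hs hvi hvi') (phi_eRoot_srefl_self hs hvi hvi')

theorem comp_phi_phi (hs : M.Small) (hrel : d * (a - d) + b * c = 0) (i : I)
    (g : VV M R →ₗ[R] R) (hg : g (eRoot M R (sroot i)) = 0) :
    g ∘ₗ phi M R a b c d i ∘ₗ phi M R a b c d i =
      a • g ∘ₗ phi M R a b c d i + (b * c) • g := by
  refine linearMap_ext_eRoot fun v => ?_
  simp only [LinearMap.comp_apply, LinearMap.add_apply, LinearMap.smul_apply, smul_eq_mul]
  by_cases hvi : v = sroot i
  · rw [hvi, phi_eRoot_sroot_self, map_zero, map_zero, hg]; ring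
  by_cases hvi' : v = -sroot i
  · rw [hvi', eRoot_neg_sroot]; simp
  rw [phi_phi_eRoot hs hrel hvi hvi', map_add, map_smul, map_smul, smul_eq_mul, smul_eq_mul]

theorem phi_eRoot_sroot_of_two (hs : M.Small) {i j : I} (h : M.m i j = 2) :
    phi M R a b c d j (eRoot M R (sroot i)) = d • eRoot M R (sroot i) :=
  phi_eRoot_of_bform_eq_zero hs (sroot_ne_sroot (M.ne_of_ne_one (by omega)))
    ((isPos_sroot M i).ne_neg_sroot j)
    (by rw [bform_sroot_sroot, cf_of_two M h])

theorem phi_eRoot_srefl_of_two (hs : M.Small) {i j : I} (h : M.m i j = 2) {v : I → ℝ}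
    (hvi : v ≠ sroot i) (hvi' : v ≠ -sroot i) :
    phi M R a b c d i (eRoot M R (srefl M j v)) =
      phiLocal a b c d (bform M v (sroot i)) (eRoot M R (srefl M j v))
        (eRoot M R (srefl M i (srefl M j v))) := by
  rw [phi_eRoot hs (by rwa [Ne, srefl_eq_iff, srefl_sroot_of_two M h])
    (by rwa [Ne, srefl_eq_iff, srefl_neg, srefl_sroot_of_two M h]), bform_srefl_sroot,
    cf_of_two M ((M.symm j i).trans h), mul_zero, sub_zero]

theorem phi_comm_eRoot (hs : M.Small) {i j : I} (h : M.m i j = 2) (v : I → ℝ) :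
    phi M R a b c d i (phi M R a b c d j (eRoot M R v)) =
      phi M R a b c d j (phi M R a b c d i (eRoot M R v)) := by
  have hji : M.m j i = 2 := (M.symm j i).trans h
  by_cases hv : IsPos M v
  swap
  · simp [eRoot_of_not_isPos hv]
  by_cases hvi : v = sroot i
  · rw [hvi, phi_eRoot_sroot_of_two hs h, map_smul, phi_eRoot_sroot_self, smul_zero, map_zero]
  by_cases hvj : v = sroot j
  · rw [hvj, phi_eRoot_sroot_of_two hs hji, map_smul, phi_eRoot_sroot_self, smul_zero, map_zero]
  have hvi' := hv.ne_neg_sroot i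
  have hvj' := hv.ne_neg_sroot j
  refine phiLocal_comm (phi_eRoot hs hvi hvi') (phi_eRoot_srefl_of_two hs h hvi hvi')
    (phi_eRoot hs hvj hvj') ?_
  rw [phi_eRoot_srefl_of_two hs hji hvj hvj', srefl_comm M hji]

theorem phi_comm (hs : M.Small) {i j : I} (h : M.m i j = 2) :
    phi M R a b c d i ∘ₗ phi M R a b c d j = phi M R a b c d j ∘ₗ phi M R a b c d i :=
  linearMap_ext_eRoot (phi_comm_eRoot hs h)

theorem phi_eRoot_sroot_of_three (hs : M.Small) {i j : I} (h : M.m i j = 3) :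
    phi M R a b c d j (eRoot M R (sroot i)) =
      a • eRoot M R (sroot i) + c • eRoot M R (sroot i + sroot j) := by
  rw [phi_eRoot hs (sroot_ne_sroot (M.ne_of_ne_one (by omega)))
    ((isPos_sroot M i).ne_neg_sroot j), bform_sroot_sroot,
    cf_of_three M h, phiLocal_of_neg (by norm_num), srefl_sroot_of_three M h]

theorem phi_eRoot_add_sroot_of_three (hs : M.Small) {i j : I} (h : M.m i j = 3) :
    phi M R a b c d i (eRoot M R (sroot i + sroot j)) = b • eRoot M R (sroot j) := by
  rw [phi_eRoot hs (add_sroot_ne_sroot_left i j)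
    ((isPos_add_sroot hs h).ne_neg_sroot i), bform_add_left,
    bform_sroot_sroot, bform_sroot_sroot, cf_self, cf_of_three M ((M.symm j i).trans h),
    phiLocal_of_pos (by norm_num), srefl_add_sroot_of_three M h]

theorem phi_eRoot_srefl_of_three (hs : M.Small) {i j : I} (h : M.m i j = 3) {v : I → ℝ}
    (hv : v ≠ sroot i + sroot j) (hv' : v ≠ -(sroot i + sroot j)) :
    phi M R a b c d i (eRoot M R (srefl M j v)) =
      phiLocal a b c d (bform M v (sroot i) + bform M v (sroot j)) (eRoot M R (srefl M j v))
        (eRoot M R (srefl M i (srefl M j v))) := by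
  rw [phi_eRoot hs (by rwa [Ne, srefl_eq_iff, srefl_sroot_of_three M h])
    (by rwa [Ne, srefl_eq_iff, srefl_neg, srefl_sroot_of_three M h]), bform_srefl_sroot,
    cf_of_three M ((M.symm j i).trans h), mul_neg_one, sub_neg_eq_add]

theorem phi_eRoot_srefl_srefl_of_three (hs : M.Small) {i j : I} (h : M.m i j = 3) {v : I → ℝ}
    (hvj : v ≠ sroot j) (hvj' : v ≠ -sroot j) :
    phi M R a b c d i (eRoot M R (srefl M j (srefl M i v))) =
      phiLocal a b c d (bform M v (sroot j)) (eRoot M R (srefl M j (srefl M i v)))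
        (eRoot M R (srefl M i (srefl M j (srefl M i v)))) := by
  rw [phi_eRoot hs
    (by rwa [Ne, srefl_eq_iff, srefl_sroot_of_three M h, srefl_eq_iff,
      srefl_add_sroot_of_three M h])
    (by rwa [Ne, srefl_eq_iff, srefl_neg, srefl_sroot_of_three M h, srefl_eq_iff, srefl_neg,
      srefl_add_sroot_of_three M h])]
  congr 1
  rw [bform_srefl_sroot, bform_srefl_sroot_self, bform_srefl_sroot, cf_of_three M h,
    cf_of_three M ((M.symm j i).trans h)]
  ring

theorem phi_braid_eRoot_sroot (hs : M.Small) {i j : I} (h : M.m i j = 3) :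
    phi M R a b c d i (phi M R a b c d j (phi M R a b c d i (eRoot M R (sroot i)))) =
      phi M R a b c d j (phi M R a b c d i (phi M R a b c d j (eRoot M R (sroot i)))) := by
  rw [phi_eRoot_sroot_self, map_zero, map_zero, phi_eRoot_sroot_of_three hs h, map_add, map_smul,
    map_smul, phi_eRoot_sroot_self, phi_eRoot_add_sroot_of_three hs h, map_add, map_smul,
    map_smul, map_smul, phi_eRoot_sroot_self]
  simp

theorem phi_braid_eRoot (hs : M.Small) (hrel : d * (a - d) + b * c = 0) {i j : I}
    (h : M.m i j = 3) (v : I → ℝ) :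
    phi M R a b c d i (phi M R a b c d j (phi M R a b c d i (eRoot M R v))) =
      phi M R a b c d j (phi M R a b c d i (phi M R a b c d j (eRoot M R v))) := by
  have hji : M.m j i = 3 := (M.symm j i).trans h
  by_cases hv : IsPos M v
  swap
  · simp [eRoot_of_not_isPos hv]
  by_cases hvi : v = sroot i
  · rw [hvi]; exact phi_braid_eRoot_sroot hs h
  by_cases hvj : v = sroot j
  · rw [hvj]; exact (phi_braid_eRoot_sroot hs hji).symm
  by_cases hvij : v = sroot i + sroot j
  · have hj := phi_eRoot_add_sroot_of_three (R := R) (a := a) (b := b) (c := c) (d := d) hs hji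
    rw [add_comm] at hj
    rw [hvij, phi_eRoot_add_sroot_of_three hs h, hj]
    simp [phi_eRoot_sroot_self]
  have hvi' := hv.ne_neg_sroot i
  have hvj' := hv.ne_neg_sroot j
  have hvij' := hv.ne_neg (add_nonneg (sroot_nonneg i) (sroot_nonneg j))
    (isPos_add_sroot hs h).1.ne_zero
  have hvji : v ≠ sroot j + sroot i := add_comm (sroot i) (sroot j) ▸ hvij
  have hvji' : v ≠ -(sroot j + sroot i) := add_comm (sroot i) (sroot j) ▸ hvij'
  refine phiLocal_braid hrel (phi_eRoot hs hvi hvi') (phi_eRoot_srefl_self hs hvi hvi')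
    (phi_eRoot_srefl_of_three hs h hvij hvij') (phi_eRoot_srefl_srefl_of_three hs h hvj hvj')
    (phi_eRoot hs hvj hvj') (phi_eRoot_srefl_self hs hvj hvj') ?_ ?_
  · rw [phi_eRoot_srefl_of_three hs hji hvji hvji', add_comm]
  · rw [phi_eRoot_srefl_srefl_of_three hs hji hvi hvi', srefl_braid M h]


theorem phi_braid (hs : M.Small) (hrel : d * (a - d) + b * c = 0) {i j : I} (h : M.m i j = 3) :
    phi M R a b c d i ∘ₗ phi M R a b c d j ∘ₗ phi M R a b c d i =
      phi M R a b c d j ∘ₗ phi M R a b c d i ∘ₗ phi M R a b c d j :=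
  linearMap_ext_eRoot (phi_braid_eRoot hs hrel h)

end PhiRelations

section PsiRelations

variable [Fintype I] [DecidableEq I] {M : CoxM I} {R : Type} [CommRing R] {a b c d : R}
  {f : I → (VV M R →ₗ[R] R)}

theorem eq_zero_of_smul_eRoot_sroot_add_smul_eq_zero {i j : I} (hij : i ≠ j) {s t : R}
    (h : s • eRoot M R (sroot i) + t • eRoot M R (sroot j) = 0) : s = 0 ∧ t = 0 := by
  have hne : simplePos M i ≠ simplePos M j := fun h' => sroot_ne_sroot hij congr(($h').1)
  rw [eRoot_sroot, eRoot_sroot] at h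
  have hi := DFunLike.congr_fun h (simplePos M i)
  have hj := DFunLike.congr_fun h (simplePos M j)
  simp only [ev, Finsupp.coe_add, Finsupp.coe_smul, Pi.add_apply, Pi.smul_apply,
    Finsupp.single_eq_same, Finsupp.single_eq_of_ne hne, Finsupp.single_eq_of_ne hne.symm,
    smul_eq_mul, mul_one, mul_zero, add_zero, zero_add, Finsupp.coe_zero, Pi.zero_apply] at hi hj
  exact ⟨hi, hj⟩

theorem eq_zero_of_add_smul_eRoot_add_sroot_eq_zero (hs : M.Small) {i j : I} (h3 : M.m i j = 3)
    {s t u : R} (h : s • eRoot M R (sroot i) + t • eRoot M R (sroot j)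
      + u • eRoot M R (sroot i + sroot j) = 0) : u = 0 := by
  obtain ⟨γ, hγ⟩ : ∃ γ : Pos M, γ.1 = sroot i + sroot j := ⟨⟨_, isPos_add_sroot hs h3⟩, rfl⟩
  have hiγ : simplePos M i ≠ γ := fun h' => add_sroot_ne_sroot_left i j (hγ ▸ congr(($h').1)).symm
  have hjγ : simplePos M j ≠ γ := fun h' => add_sroot_ne_sroot_right i j (hγ ▸ congr(($h').1)).symm
  rw [eRoot_sroot, eRoot_sroot, ← hγ, eRoot_val] at h
  simpa [ev, Finsupp.single_apply, hiγ, hjγ] using DFunLike.congr_fun h γ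

theorem psim_apply (i : I) (v : VV M R) :
    psim M R a b c d f i v = phi M R a b c d i v + f i v • eRoot M R (sroot i) := by
  rw [psim, LinearMap.add_apply, LinearMap.smulRight_apply, eRoot_sroot]

theorem psim_psim_apply_of_two (hs : M.Small) {i j : I} (h : M.m i j = 2)
    (hfi : f i (eRoot M R (sroot j)) = 0) (v : VV M R) :
    psim M R a b c d f i (psim M R a b c d f j v) =
      phi M R a b c d i (phi M R a b c d j v) + f i (phi M R a b c d j v) • eRoot M R (sroot i)
        + (d * f j v) • eRoot M R (sroot j) := by
  simp only [psim_apply, map_add, map_smul, phi_eRoot_sroot_of_two hs ((M.symm j i).trans h), hfi]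
  module

theorem psim_psim_psim_apply_of_three (hs : M.Small) {i j : I} (h : M.m i j = 3)
    (hfi : f i (eRoot M R (sroot j)) = 0) (hfj : f j (eRoot M R (sroot i)) = 0) (v : VV M R) :
    psim M R a b c d f i (psim M R a b c d f j (psim M R a b c d f i v)) =
      phi M R a b c d i (phi M R a b c d j (phi M R a b c d i v))
        + (f i (phi M R a b c d j (phi M R a b c d i v)) + f i v *
            (a * f i (eRoot M R (sroot i)) + c * f i (eRoot M R (sroot i + sroot j))))
          • eRoot M R (sroot i)
        + (b * c * f i v + a * f j (phi M R a b c d i v)) • eRoot M R (sroot j)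
        + (c * f j (phi M R a b c d i v)) • eRoot M R (sroot i + sroot j) := by
  have hij := phi_eRoot_sroot_of_three (R := R) (a := a) (b := b) (c := c) (d := d) hs
    ((M.symm j i).trans h)
  rw [add_comm (sroot j)] at hij
  simp only [psim_apply, map_add, map_smul, phi_eRoot_sroot_self, phi_eRoot_sroot_of_three hs h,
    phi_eRoot_add_sroot_of_three hs h, hij, hfi, hfj]
  module

theorem psim_comm_iff (hs : M.Small) {i j : I} (h : M.m i j = 2)
    (hfi : f i (eRoot M R (sroot j)) = 0) (hfj : f j (eRoot M R (sroot i)) = 0) :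
    psim M R a b c d f i ∘ₗ psim M R a b c d f j = psim M R a b c d f j ∘ₗ psim M R a b c d f i ↔
      f i ∘ₗ phi M R a b c d j = d • f i ∧ f j ∘ₗ phi M R a b c d i = d • f j := by
  have hji : M.m j i = 2 := (M.symm j i).trans h
  have hdiff : ∀ v, psim M R a b c d f i (psim M R a b c d f j v)
      - psim M R a b c d f j (psim M R a b c d f i v) =
        (f i (phi M R a b c d j v) - d * f i v) • eRoot M R (sroot i)
          + (d * f j v - f j (phi M R a b c d i v)) • eRoot M R (sroot j) := fun v => by
    rw [psim_psim_apply_of_two hs h hfi, psim_psim_apply_of_two hs hji hfj,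
      ← LinearMap.comp_apply (phi M R a b c d i), phi_comm hs h, LinearMap.comp_apply]
    module
  constructor
  · intro hψ
    have hcoeff (v : VV M R) := eq_zero_of_smul_eRoot_sroot_add_smul_eq_zero
      (M.ne_of_ne_one (i := i) (j := j) (by omega))
      (by rw [← hdiff v, ← LinearMap.comp_apply, hψ, LinearMap.comp_apply, sub_self])
    exact ⟨LinearMap.ext fun v => sub_eq_zero.1 (hcoeff v).1,
      LinearMap.ext fun v => (sub_eq_zero.1 (hcoeff v).2).symm⟩
  · rintro ⟨hi, hj⟩
    refine LinearMap.ext fun v => sub_eq_zero.1 ?_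
    rw [LinearMap.comp_apply, LinearMap.comp_apply, hdiff, ← LinearMap.comp_apply (f i), hi,
      ← LinearMap.comp_apply (f j), hj]
    simp

theorem psim_braid_sub (hs : M.Small) (hrel : d * (a - d) + b * c = 0) {i j : I}
    (h : M.m i j = 3) (hfi : f i (eRoot M R (sroot j)) = 0)
    (hfj : f j (eRoot M R (sroot i)) = 0) (v : VV M R) :
    psim M R a b c d f i (psim M R a b c d f j (psim M R a b c d f i v))
        - psim M R a b c d f j (psim M R a b c d f i (psim M R a b c d f j v)) =
      (f i (phi M R a b c d j (phi M R a b c d i v)) + f i v *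
          (a * f i (eRoot M R (sroot i)) + c * f i (eRoot M R (sroot i + sroot j)))
          - b * c * f j v - a * f i (phi M R a b c d j v)) • eRoot M R (sroot i)
        + (b * c * f i v + a * f j (phi M R a b c d i v) - f j (phi M R a b c d i
          (phi M R a b c d j v)) - f j v * (a * f j (eRoot M R (sroot j))
            + c * f j (eRoot M R (sroot i + sroot j)))) • eRoot M R (sroot j)
        + (c * f j (phi M R a b c d i v) - c * f i (phi M R a b c d j v))
          • eRoot M R (sroot i + sroot j) := by
  have hbraid := LinearMap.congr_fun (phi_braid hs hrel h) v
  simp only [LinearMap.comp_apply] at hbraid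
  rw [psim_psim_psim_apply_of_three hs h hfi hfj,
    psim_psim_psim_apply_of_three hs ((M.symm j i).trans h) hfj hfi, add_comm (sroot j), hbraid]
  module

theorem psim_braid (hs : M.Small) (hrel : d * (a - d) + b * c = 0) {i j : I} (h : M.m i j = 3)
    (hfi : f i (eRoot M R (sroot j)) = 0) (hfj : f j (eRoot M R (sroot i)) = 0)
    (hF : f i ∘ₗ phi M R a b c d j = f j ∘ₗ phi M R a b c d i) :
    psim M R a b c d f i ∘ₗ psim M R a b c d f j ∘ₗ psim M R a b c d f i =
      psim M R a b c d f j ∘ₗ psim M R a b c d f i ∘ₗ psim M R a b c d f j := by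
  have hFv := LinearMap.congr_fun hF
  simp only [LinearMap.comp_apply] at hFv
  have hsq_i := LinearMap.congr_fun (comp_phi_phi hs hrel i (f j) hfj)
  have hsq_j := LinearMap.congr_fun (comp_phi_phi hs hrel j (f i) hfi)
  simp only [LinearMap.comp_apply, LinearMap.add_apply, LinearMap.smul_apply, smul_eq_mul]
    at hsq_i hsq_j
  -- `f_i(φ_j e_{α_i}) = f_j(φ_i e_{α_i}) = 0`, and symmetrically for `e_{α_j}`
  have hκi := hFv (eRoot M R (sroot i))
  rw [phi_eRoot_sroot_of_three hs h, phi_eRoot_sroot_self, map_zero, map_add, map_smul,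
    map_smul, smul_eq_mul, smul_eq_mul] at hκi
  have hκj := hFv (eRoot M R (sroot j))
  rw [phi_eRoot_sroot_of_three hs ((M.symm j i).trans h), phi_eRoot_sroot_self, map_zero,
    map_add, map_smul, map_smul, smul_eq_mul, smul_eq_mul, add_comm (sroot j)] at hκj
  refine LinearMap.ext fun v => sub_eq_zero.1 ?_
  simp only [LinearMap.comp_apply]
  rw [psim_braid_sub hs hrel h hfi hfj, hFv (phi M R a b c d i v), hsq_i,
    ← hFv (phi M R a b c d j v), hsq_j, hFv v, hκi, ← hκj]
  module

theorem comp_phi_eq_of_psim_braid (hs : M.Small) (hrel : d * (a - d) + b * c = 0) {i j : I}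
    (h : M.m i j = 3) (hfi : f i (eRoot M R (sroot j)) = 0)
    (hfj : f j (eRoot M R (sroot i)) = 0) (hc : IsUnit c)
    (hψ : psim M R a b c d f i ∘ₗ psim M R a b c d f j ∘ₗ psim M R a b c d f i =
      psim M R a b c d f j ∘ₗ psim M R a b c d f i ∘ₗ psim M R a b c d f j) :
    f i ∘ₗ phi M R a b c d j = f j ∘ₗ phi M R a b c d i := by
  refine LinearMap.ext fun v => ?_
  have hγ := eq_zero_of_add_smul_eRoot_add_sroot_eq_zero hs h <| by
    rw [← psim_braid_sub hs hrel h hfi hfj v, sub_eq_zero]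
    exact LinearMap.congr_fun hψ v
  exact (hc.mul_left_cancel (sub_eq_zero.1 hγ)).symm

end PsiRelations

end LK

open LK in
theorem statement_3_general {I : Type} [Fintype I] [DecidableEq I] (M : CoxM I) (hsmall : M.Small)
    (R : Type) [CommRing R] (a b c d : R) (f : I → (VV M R →ₗ[R] R)) (i j : I)
    (hrel : d * (a - d) + b * c = 0)
    (hfi : f i (ev M R (simplePos M j)) = 0) (hfj : f j (ev M R (simplePos M i)) = 0) :
    (M.m i j = 2 →
      ((psim M R a b c d f i).comp (psim M R a b c d f j)
          = (psim M R a b c d f j).comp (psim M R a b c d f i)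
        ↔ ((f i).comp (phi M R a b c d j) = d • f i ∧
           (f j).comp (phi M R a b c d i) = d • f j))) ∧
    (M.m i j = 3 →
      ((f i).comp (phi M R a b c d j) = (f j).comp (phi M R a b c d i) →
        (psim M R a b c d f i).comp ((psim M R a b c d f j).comp (psim M R a b c d f i))
          = (psim M R a b c d f j).comp ((psim M R a b c d f i).comp (psim M R a b c d f j))) ∧
      (IsUnit c →
        (psim M R a b c d f i).comp ((psim M R a b c d f j).comp (psim M R a b c d f i))
          = (psim M R a b c d f j).comp ((psim M R a b c d f i).comp (psim M R a b c d f j)) →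
        (f i).comp (phi M R a b c d j) = (f j).comp (phi M R a b c d i))) := by
  rw [← eRoot_sroot] at hfi hfj
  exact ⟨fun h2 => psim_comm_iff hsmall h2 hfi hfj,
    fun h3 => ⟨psim_braid hsmall hrel h3 hfi hfj,
      fun hc => comp_phi_eq_of_psim_braid hsmall hrel h3 hfi hfj hc⟩⟩

open LK in
/-- braid relations for the maps `ψ_i`. -/
theorem statement_3 {I : Type} [Fintype I] [DecidableEq I] (M : CoxM I) (hsmall : M.Small)
    (R : Type) [CommRing R] (a b c d : R) (f : I → (VV M R →ₗ[R] R)) (i j : I) (hij : i ≠ j)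
    (hrel : d * (a - d) + b * c = 0)
    (hfi : f i (ev M R (simplePos M j)) = 0) (hfj : f j (ev M R (simplePos M i)) = 0) :
    (M.m i j = 2 →
      ((psim M R a b c d f i).comp (psim M R a b c d f j)
          = (psim M R a b c d f j).comp (psim M R a b c d f i)
        ↔ ((f i).comp (phi M R a b c d j) = d • f i ∧
           (f j).comp (phi M R a b c d i) = d • f j))) ∧
    (M.m i j = 3 →
      ((f i).comp (phi M R a b c d j) = (f j).comp (phi M R a b c d i) →
        (psim M R a b c d f i).comp ((psim M R a b c d f j).comp (psim M R a b c d f i))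
          = (psim M R a b c d f j).comp ((psim M R a b c d f i).comp (psim M R a b c d f j))) ∧
      (IsUnit c →
        (psim M R a b c d f i).comp ((psim M R a b c d f j).comp (psim M R a b c d f i))
          = (psim M R a b c d f j).comp ((psim M R a b c d f i).comp (psim M R a b c d f j)) →
        (f i).comp (phi M R a b c d j) = (f j).comp (phi M R a b c d i))) :=
  statement_3_general M hsmall R a b c d f i j hrel hfi hfj
end

section
/- Let Γ be a Coxeter matrix with finite index set I, B⁺ its Artin-Tits monoid, M a left cancellative monoid, and ρ : B⁺ → M a monoid homomorphism such that for all b, b' ∈ B⁺, ρ(b) = ρ(b') implies I(b) = I(b'). Then ρ is injective. -/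
set_option maxRecDepth 4000

/-! Induct on a word for `x`. If `x = s_i x'`, then `i ∈ I(x) = I(y)`, so `y = s_i y'`, and left
cancellation in `M` gives `ρ(x') = ρ(y')`. If `x = 1`, then `I(y) = I(1) = ∅` forces `y = 1`. -/

theorem MonoidHom.injective_of_closure_eq_top_of_dvd {B N : Type*} [Monoid B] [Monoid N]
    [IsLeftCancelMul N] {S : Set B} (hS : Submonoid.closure S = ⊤) (hS1 : ∀ s ∈ S, ¬s ∣ 1)
    (f : B →* N) (hf : ∀ x y, f x = f y → ∀ s ∈ S, s ∣ x → s ∣ y) :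
    Function.Injective f := by
  intro x
  induction x using Submonoid.induction_of_closure_eq_top_left hS with
  | one =>
    intro y hy
    induction y using Submonoid.induction_of_closure_eq_top_left hS with
    | one => rfl
    | mul_left s hs y _ => exact (hS1 s hs (hf _ _ hy.symm s hs (dvd_mul_right s y))).elim
  | mul_left s hs x ih =>
    intro y hy
    obtain ⟨y', rfl⟩ := hf _ _ hy s hs (dvd_mul_right s x)
    rw [map_mul, map_mul] at hy
    rw [ih (mul_left_cancel hy)]

namespace LK

variable {I : Type}

theorem lift_const_braidWord {N : Type*} [Monoid N] (a : N) (k : ℕ) (i j : I) :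
    FreeMonoid.lift (fun _ => a) (braidWord k i j) = a ^ k := by
  simp [braidWord, braidList, Function.comp_def]

-- Well defined because both sides of a braid relation have the same length.
def AM.liftConst (M : CoxM I) {N : Type*} [Monoid N] (a : N) : AM M →* N :=
  Con.lift _ (FreeMonoid.lift fun _ => a) <| Con.conGen_le.2 fun _ _ ⟨i, j, _, hx, hy⟩ => by
    rw [hx, hy]
    exact (lift_const_braidWord a _ i j).trans (lift_const_braidWord a _ j i).symm

theorem gen_not_dvd_one (M : CoxM I) (i : I) : ¬gen M i ∣ 1 := fun h =>
  one_ne_zero (zero_dvd_iff.mp (map_dvd (AM.liftConst M (0 : ℕ)) h))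

theorem closure_range_gen (M : CoxM I) : Submonoid.closure (Set.range (gen M)) = ⊤ := by
  have hlift : FreeMonoid.lift (gen M) = (artinCon M).mk' := FreeMonoid.hom_eq fun _ => rfl
  rw [← FreeMonoid.mrange_lift, MonoidHom.mrange_eq_top, hlift]
  exact Con.mk'_surjective

end LK

open LK in
theorem statement_5_general {I : Type} (M : CoxM I)
    (Mo : Type) [Monoid Mo] (hcanc : ∀ x y z : Mo, x * y = x * z → y = z)
    (rho : AM M →* Mo)
    (h : ∀ x y : AM M, rho x = rho y → IdxSet M x = IdxSet M y) :
    Function.Injective rho := by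
  have : IsLeftCancelMul Mo := ⟨hcanc⟩
  refine MonoidHom.injective_of_closure_eq_top_of_dvd (closure_range_gen M) ?_ rho ?_
  · rintro _ ⟨i, rfl⟩
    exact gen_not_dvd_one M i
  · rintro x y hxy _ ⟨i, rfl⟩ hi
    exact (h x y hxy ▸ hi : i ∈ IdxSet M y)

open LK in
/-- injectivity criterion for monoid homomorphisms on Artin–Tits monoids. -/
theorem statement_5 {I : Type} [Fintype I] [DecidableEq I] (M : CoxM I)
    (Mo : Type) [Monoid Mo] (hcanc : ∀ x y z : Mo, x * y = x * z → y = z)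
    (rho : AM M →* Mo)
    (h : ∀ x y : AM M, rho x = rho y → IdxSet M x = IdxSet M y) :
    Function.Injective rho :=
  statement_5_general M Mo hcanc rho h
end

section
/- Let Γ = (m_{i,j})_{i,j∈I} be a Coxeter matrix of small type, B⁺ its Artin-Tits monoid, Ω a set, b ↦ R_b a monoid homomorphism from B⁺ to the monoid Bin(Ω) of binary relations on Ω, and (α_i)_{i∈I} a family of elements of Ω such that: (i) α_i ∉ R_{s_i}(Ω); (ii) if i ≠ j then α_i R_{s_j} α_i; (iii) if m_{i,j} = 3 then α_i (R_{s_j}R_{s_i}) α_j. Then for every b ∈ B⁺ and i ∈ I: s_i ≼ b if and only if α_i ∉ R_b(Ω). In particular, for b, b' ∈ B⁺, R_b(Ω) = R_{b'}(Ω) implies I(b) = I(b'). -/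
set_option maxRecDepth 4000

/-!
Induct on the length of `b`. If `s_i ⋠ b`, write `b = s_j b'` with `j ≠ i`. When `s_i ⋠ b'`,
hypothesis (ii) lets `α_i` pass through `R_{s_j}` and induction applies to `b'`. Otherwise
`b' = s_i c`; then `m_{i,j} = 3`, since `m_{i,j} = 2` would let `s_i` commute to the front of `b`,
and `s_j ⋠ c`, since otherwise `b` would start with `s_j s_i s_j = s_i s_j s_i`. Hypothesis (iii)
carries `α_i` to `α_j` through `R_{s_j s_i}` and induction applies to `c`. Conversely, if
`b = s_i c` then any `β` with `α_i R_b β` factors through `R_{s_i}`, contradicting (i).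
-/

namespace LK

variable {I : Type} {M : CoxM I}

theorem Bin.mem_image_univ {Ω : Type} (T : Bin Ω) (x : Ω) :
    x ∈ T.image Set.univ ↔ ∃ y, T x y := by
  simp [Bin.image]

def wordLength (I : Type) : FreeMonoid I →* Multiplicative ℕ where
  toFun w := Multiplicative.ofAdd w.length
  map_one' := rfl
  map_mul' x y := by simp [FreeMonoid.length_mul, ofAdd_add]

theorem artinCon_le_ker_wordLength : artinCon M ≤ Con.ker (wordLength I) := by
  refine Con.conGen_le.mpr ?_
  rintro _ _ ⟨i, j, -, rfl, rfl⟩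
  simp [Con.ker_rel, wordLength, braidWord, braidList, FreeMonoid.length]

noncomputable def AM.length (b : AM M) : ℕ :=
  Multiplicative.toAdd ((artinCon M).lift (wordLength I) artinCon_le_ker_wordLength b)

theorem AM.length_mul (a b : AM M) : (a * b).length = a.length + b.length := by
  simp only [AM.length]
  erw [map_mul]
  rfl

theorem AM.length_gen (i : I) : (gen M i).length = 1 := by
  simp [AM.length, gen, wordLength, FreeMonoid.length]

theorem AM.eq_one_or_exists_eq_gen_mul (b : AM M) : b = 1 ∨ ∃ j b', b = gen M j * b' := by
  obtain ⟨w, rfl⟩ := (artinCon M).mk'_surjective b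
  induction w using FreeMonoid.casesOn with
  | one => exact Or.inl (map_one _)
  | of_mul j w => exact Or.inr ⟨j, (artinCon M).mk' w, map_mul _ _ _⟩

theorem mk'_braidWord_eq {i j : I} (h : M.m i j ≠ 0) :
    (artinCon M).mk' (braidWord (M.m i j) i j) = (artinCon M).mk' (braidWord (M.m i j) j i) :=
  (Con.eq _).mpr (ConGen.Rel.of _ _ ⟨i, j, h, rfl, rfl⟩)

theorem gen_mul_gen_comm {i j : I} (h : M.m i j = 2) :
    gen M i * gen M j = gen M j * gen M i := by
  have := mk'_braidWord_eq (M := M) (i := i) (j := j) (by omega)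
  rw [h] at this
  -- `braidWord 2 i j` unfolds definitionally to `of i * of j`
  exact this

theorem gen_braid_three {i j : I} (h : M.m i j = 3) :
    gen M i * gen M j * gen M i = gen M j * gen M i * gen M j := by
  have := mk'_braidWord_eq (M := M) (i := i) (j := j) (by omega)
  rw [h] at this
  exact this

theorem CoxM.Small.m_eq_three_of_not_gen_dvd_gen_mul (hsmall : M.Small) {i j : I} {b : AM M}
    (hij : i ≠ j) (hb : gen M i ∣ b) (hnd : ¬ gen M i ∣ gen M j * b) : M.m i j = 3 := by
  obtain ⟨c, rfl⟩ := hb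
  rcases hsmall i j with h | h | h
  · exact absurd ((M.one_iff i j).mp h) hij
  · exact absurd ⟨gen M j * c, by rw [← mul_assoc, ← gen_mul_gen_comm h, mul_assoc]⟩ hnd
  · exact h

theorem not_gen_dvd_of_not_gen_dvd_braid {i j : I} {c : AM M} (h : M.m i j = 3)
    (hnd : ¬ gen M i ∣ gen M j * (gen M i * c)) : ¬ gen M j ∣ c := by
  rintro ⟨d, rfl⟩
  refine hnd ⟨gen M j * gen M i * d, ?_⟩
  simp only [← mul_assoc, gen_braid_three h]

section Relations

variable {Ω : Type} (Rh : AM M →* Bin Ω) (aI : I → Ω)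

theorem exists_rel_of_not_gen_dvd (hsmall : M.Small)
    (h2 : ∀ i j : I, i ≠ j → Rh (gen M j) (aI i) (aI i))
    (h3 : ∀ i j : I, M.m i j = 3 → (Rh (gen M j) * Rh (gen M i)) (aI i) (aI j))
    (b : AM M) (i : I) (hb : ¬ gen M i ∣ b) : ∃ y, Rh b (aI i) y := by
  rcases b.eq_one_or_exists_eq_gen_mul with rfl | ⟨j, b', rfl⟩
  · exact ⟨aI i, by rw [map_one]; rfl⟩
  have hij : i ≠ j := by
    rintro rfl
    exact hb (dvd_mul_right _ _)
  by_cases hib : gen M i ∣ b'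
  · have hm := hsmall.m_eq_three_of_not_gen_dvd_gen_mul hij hib hb
    obtain ⟨c, rfl⟩ := hib
    obtain ⟨y, hy⟩ := exists_rel_of_not_gen_dvd hsmall h2 h3 c j
      (not_gen_dvd_of_not_gen_dvd_braid hm hb)
    refine ⟨y, ?_⟩
    rw [← mul_assoc, map_mul, map_mul]
    exact ⟨aI j, h3 i j hm, hy⟩
  · obtain ⟨y, hy⟩ := exists_rel_of_not_gen_dvd hsmall h2 h3 b' i hib
    refine ⟨y, ?_⟩
    rw [map_mul]
    exact ⟨aI i, h2 i j hij, hy⟩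
termination_by b.length
decreasing_by
  all_goals subst_vars; simp only [AM.length_mul, AM.length_gen]; omega

theorem gen_dvd_iff_not_mem_image (hsmall : M.Small)
    (h1 : ∀ i : I, aI i ∉ Bin.image (Rh (gen M i)) Set.univ)
    (h2 : ∀ i j : I, i ≠ j → Rh (gen M j) (aI i) (aI i))
    (h3 : ∀ i j : I, M.m i j = 3 → (Rh (gen M j) * Rh (gen M i)) (aI i) (aI j))
    (b : AM M) (i : I) : gen M i ∣ b ↔ aI i ∉ Bin.image (Rh b) Set.univ := by
  rw [Bin.mem_image_univ]
  constructor
  · rintro ⟨c, rfl⟩ ⟨y, hy⟩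
    rw [map_mul] at hy
    obtain ⟨γ, hγ, -⟩ := hy
    exact h1 i ((Bin.mem_image_univ _ _).mpr ⟨γ, hγ⟩)
  · exact not_imp_comm.mp (exists_rel_of_not_gen_dvd Rh aI hsmall h2 h3 b i)

end Relations

end LK

open LK in
theorem statement_6_general {I : Type} (M : CoxM I) (hsmall : M.Small)
    (Omega : Type) (Rh : AM M →* Bin Omega) (aI : I → Omega)
    (h1 : ∀ i : I, aI i ∉ Bin.image (Rh (gen M i)) Set.univ)
    (h2 : ∀ i j : I, i ≠ j → Rh (gen M j) (aI i) (aI i))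
    (h3 : ∀ i j : I, M.m i j = 3 → (Rh (gen M j) * Rh (gen M i)) (aI i) (aI j)) :
    (∀ (x : AM M) (i : I), gen M i ∣ x ↔ aI i ∉ Bin.image (Rh x) Set.univ) ∧
    (∀ x y : AM M,
      Bin.image (Rh x) Set.univ = Bin.image (Rh y) Set.univ → IdxSet M x = IdxSet M y) := by
  have hdvd := gen_dvd_iff_not_mem_image Rh aI hsmall h1 h2 h3
  refine ⟨hdvd, fun x y hxy => Set.ext fun i => ?_⟩
  simp only [IdxSet, Set.mem_ofPred_eq, hdvd, hxy]

open LK in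
/-- divisibility detected by binary relations. -/
theorem statement_6 {I : Type} [Fintype I] [DecidableEq I] (M : CoxM I) (hsmall : M.Small)
    (Omega : Type) (Rh : AM M →* Bin Omega) (aI : I → Omega)
    (h1 : ∀ i : I, aI i ∉ Bin.image (Rh (gen M i)) Set.univ)
    (h2 : ∀ i j : I, i ≠ j → Rh (gen M j) (aI i) (aI i))
    (h3 : ∀ i j : I, M.m i j = 3 → (Rh (gen M j) * Rh (gen M i)) (aI i) (aI j)) :
    (∀ (x : AM M) (i : I), gen M i ∣ x ↔ aI i ∉ Bin.image (Rh x) Set.univ) ∧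
    (∀ x y : AM M,
      Bin.image (Rh x) Set.univ = Bin.image (Rh y) Set.univ → IdxSet M x = IdxSet M y) :=
  statement_6_general M hsmall Omega Rh aI h1 h2 h3
end
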